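/- arXiv:2009.10981 — 6 statements merged into one kernel-verified Lean document; each statement's English description precedes it below -/
import Mathlib

section
/- There exists a constant C such that for every integer n ≥ 3 the following holds: let σ = (1 2 … n) be the n-cycle on {1,…,n} and ρ = (1 2 3) the 3-cycle. Then every even permutation of {1,…,n} can be written as a product of at most C·n² elements of {σ, σ⁻¹, ρ, ρ⁻¹}. In particular, the subgroup generated by σ and ρ contains the alternating group A_n. -/
/-!
Conjugating a word by a generator costs two letters and moves the points of a 3-cycle by that
generator. Conjugating `(0 1 k)` by `σ` gives `(1 2 k+1)`, and then by `ρ⁻¹` gives `(0 1 k+1)`;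
translating by `σ` further, every 3-cycle `(i i+1 k)` has length at most `4k`. An even
permutation fixing `0, …, i-1` but not `i` is corrected at `i` by one such 3-cycle or its
inverse, and after `n - 2` corrections what remains is an even permutation moving at most two
points, i.e. the identity. This gives length at most `4n²`.
-/

open Equiv Equiv.Perm

section WordLength

variable {G : Type*} [Group G]

def WordLengthLE (T : Set G) (g : G) (k : ℕ) : Prop :=
  ∃ l : List G, l.length ≤ k ∧ (∀ s ∈ l, s ∈ T ∨ s⁻¹ ∈ T) ∧ l.prod = g

namespace WordLengthLE

variable {T : Set G} {g h s : G} {k j : ℕ}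

theorem mono (hg : WordLengthLE T g k) (hkj : k ≤ j) : WordLengthLE T g j := by
  obtain ⟨l, hl, hlT, rfl⟩ := hg
  exact ⟨l, hl.trans hkj, hlT, rfl⟩

theorem one : WordLengthLE T 1 0 := ⟨[], le_rfl, by simp, List.prod_nil⟩

theorem of_mem (hs : s ∈ T ∨ s⁻¹ ∈ T) : WordLengthLE T s 1 :=
  ⟨[s], le_rfl, by simpa using hs, List.prod_singleton⟩

theorem mul (hg : WordLengthLE T g k) (hh : WordLengthLE T h j) :
    WordLengthLE T (g * h) (k + j) := by
  obtain ⟨l, hl, hlT, rfl⟩ := hg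
  obtain ⟨l', hl', hl'T, rfl⟩ := hh
  refine ⟨l ++ l', by simpa using add_le_add hl hl', ?_, List.prod_append⟩
  intro s hs
  rcases List.mem_append.mp hs with hs | hs
  exacts [hlT s hs, hl'T s hs]

theorem inv (hg : WordLengthLE T g k) : WordLengthLE T g⁻¹ k := by
  obtain ⟨l, hl, hlT, rfl⟩ := hg
  refine ⟨(l.map (·⁻¹)).reverse, by simpa using hl, ?_, (List.prod_inv_reverse l).symm⟩
  simp only [List.mem_reverse, List.mem_map]
  rintro _ ⟨s, hs, rfl⟩
  simpa [or_comm] using hlT s hs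

theorem conj (hs : s ∈ T ∨ s⁻¹ ∈ T) (hg : WordLengthLE T g k) :
    WordLengthLE T (s * g * s⁻¹) (k + 2) :=
  (((of_mem hs).mul hg).mul (of_mem hs).inv).mono (by omega)

theorem mem_closure (hg : WordLengthLE T g k) : g ∈ Subgroup.closure T := by
  obtain ⟨l, -, hlT, rfl⟩ := hg
  refine list_prod_mem fun s hs => (hlT s hs).elim (fun h => Subgroup.subset_closure h) fun h => ?_
  simpa using inv_mem (Subgroup.subset_closure h)

end WordLengthLE

end WordLength

theorem List.mul_formPerm_mul_inv {α : Type*} [DecidableEq α] (g : Equiv.Perm α) :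
    ∀ l : List α, g * l.formPerm * g⁻¹ = (l.map g).formPerm
  | [] => by simp
  | [_] => by simp
  | x :: y :: l => by
    rw [List.map_cons, List.map_cons, formPerm_cons_cons, formPerm_cons_cons, swap_apply_apply,
      ← List.map_cons, ← List.mul_formPerm_mul_inv g (y :: l)]
    group

theorem List.sign_formPerm_triple {α : Type*} [DecidableEq α] [Fintype α] {a b c : α}
    (hab : a ≠ b) (hbc : b ≠ c) : sign [a, b, c].formPerm = 1 := by
  simp [formPerm_cons_cons, sign_swap hab, sign_swap hbc]

section FixingInitialSegment

variable {n : ℕ}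

theorem Equiv.Perm.eq_one_of_sign_eq_one_of_forall_apply_eq {π : Perm (Fin n)}
    (hπ : sign π = 1) (hfix : ∀ x : Fin n, x.val + 2 < n → π x = x) : π = 1 := by
  have hcard : π.support.card ≤ 2 := by
    have hsub : π.support.map Fin.valEmbedding ⊆ Finset.Ico (n - 2) n := by
      intro v hv
      obtain ⟨x, hx, rfl⟩ := Finset.mem_map.mp hv
      have : ¬ x.val + 2 < n := fun h => mem_support.mp hx (hfix x h)
      simp only [Fin.valEmbedding_apply, Finset.mem_Ico]
      omega
    exact (Finset.card_map _).symm.trans_le ((Finset.card_le_card hsub).trans (by simp; omega))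
  rcases hcard.lt_or_eq with hlt | htwo
  · exact card_support_le_one.mp (by omega)
  · have := (card_support_eq_two.mp htwo).sign_eq
    rw [hπ] at this
    exact absurd this (by decide)

variable {T : Set (Perm (Fin n))} {L : ℕ}
  (hT : ∀ i b : Fin n, i < b → i.val + 3 ≤ n →
    ∃ τ, WordLengthLE T τ L ∧ sign τ = 1 ∧ τ b = i ∧ ∀ x < i, τ x = x)
include hT

theorem wordLengthLE_of_sign_eq_one_of_forall_apply_eq (k : ℕ) :
    ∀ π : Perm (Fin n), sign π = 1 → (∀ x : Fin n, x.val + k + 2 < n → π x = x) →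
      WordLengthLE T π (k * L) := by
  induction k with
  | zero =>
    intro π hπ hfix
    rw [eq_one_of_sign_eq_one_of_forall_apply_eq hπ hfix]
    exact WordLengthLE.one.mono (Nat.zero_le _)
  | succ k ih =>
    intro π hπ hfix
    by_cases hfix' : ∀ x : Fin n, x.val + k + 2 < n → π x = x
    · exact (ih π hπ hfix').mono (Nat.mul_le_mul_right L k.le_succ)
    push Not at hfix'
    obtain ⟨i, hik, hπi⟩ := hfix'
    have hi : i.val + k + 2 + 1 = n := by
      by_contra
      exact hπi (hfix i (by omega))
    have hib : i < π i := by
      refine lt_of_le_of_ne (not_lt.mp fun hlt => hπi (π.injective ?_)) (Ne.symm hπi)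
      exact hfix _ (by rw [Fin.lt_def] at hlt; omega)
    obtain ⟨τ, hτ, hτsign, hτi, hτfix⟩ := hT i (π i) hib (by omega)
    have hτπ : WordLengthLE T (τ * π) (k * L) := by
      refine ih _ (by rw [Perm.sign_mul, hτsign, hπ, one_mul]) fun x hx => ?_
      rcases lt_or_eq_of_le (show x.val ≤ i.val by omega) with hlt | heq
      · rw [mul_apply, hfix x (by omega), hτfix x hlt]
      · rw [Fin.ext heq, mul_apply, hτi]
    simpa [add_mul, add_comm] using hτ.inv.mul hτπ

theorem wordLengthLE_of_sign_eq_one {π : Perm (Fin n)} (hπ : sign π = 1) :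
    WordLengthLE T π ((n - 2) * L) :=
  wordLengthLE_of_sign_eq_one_of_forall_apply_eq hT (n - 2) π hπ fun _ _ => by omega

end FixingInitialSegment

section CyclicShiftAndThreeCycle

variable {n : ℕ}

local notation "σ" => finRotate n
local notation "ρ" => List.formPerm [(⟨0, by omega⟩ : Fin n), ⟨1, by omega⟩, ⟨2, by omega⟩]

theorem finRotate_mk {i : ℕ} (h : i + 1 < n) : σ ⟨i, by omega⟩ = ⟨i + 1, h⟩ := by
  obtain ⟨m, rfl⟩ : ∃ m, n = m + 1 := ⟨n - 1, by omega⟩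
  exact finRotate_of_lt (by omega)

theorem finRotate_mul_formPerm_mul_inv {a b c : ℕ} (ha : a + 1 < n) (hb : b + 1 < n)
    (hc : c + 1 < n) :
    σ * [⟨a, by omega⟩, ⟨b, by omega⟩, ⟨c, by omega⟩].formPerm * σ⁻¹ =
      [⟨a + 1, ha⟩, ⟨b + 1, hb⟩, ⟨c + 1, hc⟩].formPerm := by
  rw [List.mul_formPerm_mul_inv, List.map_cons, List.map_cons, List.map_singleton,
    finRotate_mk ha, finRotate_mk hb, finRotate_mk hc]

theorem wordLengthLE_formPerm_zero_one {k : ℕ} (hk : k < n) (h2k : 2 ≤ k) :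
    WordLengthLE {σ, ρ} [⟨0, by omega⟩, ⟨1, by omega⟩, ⟨k, hk⟩].formPerm (4 * k) := by
  induction k, h2k using Nat.le_induction with
  | base =>
    have hρ : WordLengthLE {σ, ρ} ρ 1 := .of_mem (Or.inl (Set.mem_insert_of_mem _ rfl))
    exact hρ.mono (by omega)
  | succ k h2k ih =>
    have hσ : σ * [⟨0, by omega⟩, ⟨1, by omega⟩, ⟨k, by omega⟩].formPerm * σ⁻¹ =
        [⟨1, by omega⟩, ⟨2, by omega⟩, ⟨k + 1, hk⟩].formPerm :=
      finRotate_mul_formPerm_mul_inv (by omega) (by omega) hk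
    have hρ : ρ * [⟨0, by omega⟩, ⟨1, by omega⟩, ⟨k + 1, hk⟩].formPerm * ρ⁻¹ =
        [⟨1, by omega⟩, ⟨2, by omega⟩, ⟨k + 1, hk⟩].formPerm := by
      have h0 : ρ ⟨0, by omega⟩ = ⟨1, by omega⟩ := by simp [List.formPerm_cons_cons, swap_apply_def]
      have h1 : ρ ⟨1, by omega⟩ = ⟨2, by omega⟩ := by simp [List.formPerm_cons_cons, swap_apply_def]
      have hk1 : ρ ⟨k + 1, hk⟩ = ⟨k + 1, hk⟩ := List.formPerm_apply_of_notMem (by simp; omega)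
      rw [List.mul_formPerm_mul_inv, List.map_cons, List.map_cons, List.map_singleton, h0, h1, hk1]
    have hword := (ih (by omega)).conj (Or.inl (Set.mem_insert _ _))
    rw [hσ, ← hρ] at hword
    simpa [mul_assoc] using (hword.conj (s := ρ⁻¹) (Or.inr (by simp))).mono (by omega)

theorem wordLengthLE_formPerm_consecutive {i k : ℕ} (hik : i + 1 < k) (hk : k < n) :
    WordLengthLE {σ, ρ} [⟨i, by omega⟩, ⟨i + 1, by omega⟩, ⟨k, hk⟩].formPerm (4 * k) := by
  induction i generalizing k with
  | zero => exact wordLengthLE_formPerm_zero_one hk (by omega)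
  | succ i ih =>
    obtain ⟨k, rfl⟩ : ∃ k', k = k' + 1 := ⟨k - 1, by omega⟩
    have hσ : σ * [⟨i, by omega⟩, ⟨i + 1, by omega⟩, ⟨k, by omega⟩].formPerm * σ⁻¹ =
        [⟨i + 1, by omega⟩, ⟨i + 1 + 1, by omega⟩, ⟨k + 1, hk⟩].formPerm :=
      finRotate_mul_formPerm_mul_inv (by omega) (by omega) hk
    rw [← hσ]
    exact ((ih (by omega) (by omega)).conj (Or.inl (Set.mem_insert _ _))).mono (by omega)

theorem exists_wordLengthLE_apply_eq (i b : Fin n) (hib : i < b)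
    (hi : i.val + 3 ≤ n) :
    ∃ τ, WordLengthLE {σ, ρ} τ (4 * n) ∧ sign τ = 1 ∧ τ b = i ∧ ∀ x < i, τ x = x := by
  rw [Fin.lt_def] at hib
  rcases (show b.val = i.val + 1 ∨ i.val + 2 ≤ b.val by omega) with hb1 | hb2
  · refine ⟨[i, b, ⟨i.val + 2, by omega⟩].formPerm⁻¹, ?_, ?_, ?_, fun x hx => ?_⟩
    · rw [show b = ⟨i.val + 1, by omega⟩ from Fin.ext hb1]
      exact (wordLengthLE_formPerm_consecutive (by omega) (by omega)).inv.mono (by omega)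
    · rw [sign_inv]
      exact List.sign_formPerm_triple (by simp [Fin.ext_iff]; omega) (by simp [Fin.ext_iff]; omega)
    · rw [Perm.inv_eq_iff_eq]
      exact (List.formPerm_apply_head _ _ _ (by simp [Fin.ext_iff]; omega)).symm
    · rw [Perm.inv_eq_iff_eq]
      exact (List.formPerm_apply_of_notMem (by simp [Fin.ext_iff]; omega)).symm
  · refine ⟨[i, ⟨i.val + 1, by omega⟩, b].formPerm,
      (wordLengthLE_formPerm_consecutive hb2 b.isLt).mono (by omega),
      List.sign_formPerm_triple (by simp [Fin.ext_iff]) (by simp [Fin.ext_iff]; omega),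
      List.formPerm_apply_getLast _ _,
      fun x hx => List.formPerm_apply_of_notMem (by simp [Fin.ext_iff]; omega)⟩

end CyclicShiftAndThreeCycle

/-- There is a constant `C` such that for every `n ≥ 3`, every even permutation
of `{1,…,n}` (modeled as `Fin n`) is a product of at most `C * n ^ 2` elements of
`{σ, σ⁻¹, ρ, ρ⁻¹}`, where `σ = (1 2 … n)` is the full rotation and `ρ = (1 2 3)` is the
3-cycle on the first three points. In particular, the subgroup generated by `σ` and `ρ`
contains the alternating group. -/
theorem cyclic_shift_ncycle_threecycle_generate_even :
    ∃ C : ℕ, ∀ n : ℕ, ∀ _hn : 3 ≤ n,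
      (∀ π : Equiv.Perm (Fin n), Equiv.Perm.sign π = 1 →
        ∃ l : List (Equiv.Perm (Fin n)),
          l.length ≤ C * n ^ 2 ∧
          (∀ g ∈ l,
            g = finRotate n ∨ g = (finRotate n)⁻¹ ∨
            g = List.formPerm [(⟨0, by omega⟩ : Fin n), ⟨1, by omega⟩, ⟨2, by omega⟩] ∨
            g = (List.formPerm [(⟨0, by omega⟩ : Fin n), ⟨1, by omega⟩, ⟨2, by omega⟩])⁻¹) ∧
          l.prod = π) ∧
      alternatingGroup (Fin n) ≤
        Subgroup.closure
          ({finRotate n,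
            List.formPerm [(⟨0, by omega⟩ : Fin n), ⟨1, by omega⟩, ⟨2, by omega⟩]} :
            Set (Equiv.Perm (Fin n))) := by
  refine ⟨4, fun n hn => ?_⟩
  have hword : ∀ π : Perm (Fin n), sign π = 1 → WordLengthLE
      {finRotate n, [(⟨0, by omega⟩ : Fin n), ⟨1, by omega⟩, ⟨2, by omega⟩].formPerm} π
      (4 * n ^ 2) := fun π hπ =>
    (wordLengthLE_of_sign_eq_one exists_wordLengthLE_apply_eq hπ).mono
      (by nlinarith [Nat.sub_le n 2])
  refine ⟨fun π hπ => ?_, fun π hπ => (hword π (mem_alternatingGroup.mp hπ)).mem_closure⟩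
  obtain ⟨l, hl, hlT, rfl⟩ := hword π hπ
  refine ⟨l, hl, fun g hg => ?_, rfl⟩
  have hg' := hlT g hg
  simp only [Set.mem_insert_iff, Set.mem_singleton_iff, inv_eq_iff_eq_inv] at hg'
  tauto
end

section
/- There exists a constant C such that for all integers a ≥ 4 and b ≥ 5 with n = a+b−2, every even permutation of {1,…,n} can be written as a product of at most C·n² elements of {α, α⁻¹, β, β⁻¹}, where α and β are the generators of the 2-connected (a,b)-puzzle. In particular, the subgroup of S_n generated by {α, β} contains the alternating group A_n. -/
/-- Generator `α = (1 2 … a)` of the 2-connected `(a,b)`-puzzle on `n = a + b - 2` points,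
0-indexed as the cycle `(0 1 … a-1)` on `Fin (a + b - 2)`. -/
def twoConnAlpha (a b : ℕ) : Equiv.Perm (Fin (a + b - 2)) :=
  List.formPerm ((List.finRange (a + b - 2)).take a)

/-- Generator `β = (a-1 a a+1 … n)` of the 2-connected `(a,b)`-puzzle on `n = a + b - 2`
points, 0-indexed as the cycle `(a-2 a-1 … n-1)` on `Fin (a + b - 2)`. -/
def twoConnBeta (a b : ℕ) : Equiv.Perm (Fin (a + b - 2)) :=
  List.formPerm ((List.finRange (a + b - 2)).drop (a - 2))

/-!
The permutation `δ = α β⁻¹` fixes the point `f = a - 1` and permutes the other `m = n - 1`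
points in a single cycle, along which we index them by `ℤ/m`. The commutator `[α, β]` is a
product of two transpositions, and its conjugates by `α` and `β` are products
`(p q) (f r)` of two transpositions, one of them through `f`. Conjugating by powers of `δ`
moves such a product along the cycle at the cost of `O(n)` letters, and the square of
`(p q) (f u) · (p' q') (f v)` is the 3-cycle `(f u v)` as soon as the transpositions `(p q)`,
`(p' q')` avoid the other points; this is the case when `u` and `v` are at distance at least 3
on the cycle. Conjugation identities between 3-cycles through `f` reach the remaining
distances, so every 3-cycle through `f`, hence every 3-cycle, is a word of length `O(n)`.
An even permutation is a product of at most `n` 3-cycles, which gives the bound `O(n²)`.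
-/

open Equiv Equiv.Perm Finset

def HasWordLE {G : Type*} [Group G] (S : Set G) (c : ℕ) (g : G) : Prop :=
  ∃ l : List G, l.length ≤ c ∧ (∀ x ∈ l, x ∈ S ∨ x⁻¹ ∈ S) ∧ l.prod = g

namespace HasWordLE

variable {G : Type*} [Group G] {S T : Set G} {c c₁ c₂ k : ℕ} {g h : G}

theorem one (c : ℕ) : HasWordLE S c 1 := ⟨[], by simp⟩

theorem of_mem (hg : g ∈ S) : HasWordLE S 1 g := ⟨[g], by simp [hg]⟩

theorem mono (h : HasWordLE S c₁ g) (hc : c₁ ≤ c₂) : HasWordLE S c₂ g :=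
  let ⟨l, hl, hS, hg⟩ := h
  ⟨l, hl.trans hc, hS, hg⟩

theorem mul (h₁ : HasWordLE S c₁ g) (h₂ : HasWordLE S c₂ h) :
    HasWordLE S (c₁ + c₂) (g * h) := by
  obtain ⟨l₁, hl₁, hS₁, rfl⟩ := h₁
  obtain ⟨l₂, hl₂, hS₂, rfl⟩ := h₂
  refine ⟨l₁ ++ l₂, by simp; omega, fun x hx => ?_, List.prod_append⟩
  rcases List.mem_append.mp hx with hx | hx
  exacts [hS₁ x hx, hS₂ x hx]

theorem inv (h : HasWordLE S c g) : HasWordLE S c g⁻¹ := by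
  obtain ⟨l, hl, hS, rfl⟩ := h
  refine ⟨(l.map (·⁻¹ : G → G)).reverse, by simpa using hl, fun x hx => ?_,
    (List.prod_inv_reverse l).symm⟩
  simp only [List.mem_reverse, List.mem_map] at hx
  obtain ⟨y, hy, rfl⟩ := hx
  simpa [or_comm] using hS y hy

theorem pow (h : HasWordLE S c g) (j : ℕ) : HasWordLE S (c * j) (g ^ j) := by
  induction j with
  | zero => simpa using one (S := S) 0
  | succ j ih => simpa [pow_succ, Nat.mul_succ] using ih.mul h

theorem conj (hh : HasWordLE S c₁ h) (hg : HasWordLE S c₂ g) :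
    HasWordLE S (c₁ + c₂ + c₁) (h * g * h⁻¹) :=
  (hh.mul hg).mul hh.inv

theorem bind (hT : ∀ t ∈ T, HasWordLE S k t) (h : HasWordLE T c g) :
    HasWordLE S (c * k) g := by
  obtain ⟨l, hl, hTl, rfl⟩ := h
  refine (?_ : HasWordLE S (l.length * k) l.prod).mono (Nat.mul_le_mul_right k hl)
  clear hl
  induction l with
  | nil => exact one _
  | cons t l ih =>
    have ht : HasWordLE S k t := by
      rcases hTl t (by simp) with ht | ht
      · exact hT t ht
      · simpa using (hT _ ht).inv
    simpa [Nat.succ_mul, add_comm] using ht.mul (ih fun x hx => hTl x (by simp [hx]))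

theorem mem_closure (h : HasWordLE S c g) : g ∈ Subgroup.closure S := by
  obtain ⟨l, -, hS, rfl⟩ := h
  refine Subgroup.list_prod_mem _ fun x hx => ?_
  rcases hS x hx with hx | hx
  · exact Subgroup.subset_closure hx
  · simpa using Subgroup.inv_mem _ (Subgroup.subset_closure hx)

end HasWordLE

namespace List

variable {α : Type*} [DecidableEq α]

theorem formPerm_map_conj (σ : Equiv.Perm α) : ∀ l : List α,
    (l.map σ).formPerm = σ * l.formPerm * σ⁻¹
  | [] => by simp
  | [x] => by simp
  | x :: y :: l => by
    rw [map_cons, map_cons, formPerm_cons_cons, ← map_cons, formPerm_map_conj σ (y :: l),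
      swap_apply_apply, formPerm_cons_cons]
    group

theorem formPerm_three_apply {x y z : α} (h : [x, y, z].Nodup) (w : α) :
    [x, y, z].formPerm w = if w = x then y else if w = y then z else if w = z then x else w := by
  simp only [nodup_cons, mem_cons, not_or, not_mem_nil] at h
  simp only [formPerm_cons_cons, formPerm_singleton, mul_one, Perm.mul_apply, swap_apply_def]
  split_ifs <;> simp_all

theorem formPerm_three_inv {x y z : α} (h : [x, y, z].Nodup) :
    ([x, y, z].formPerm)⁻¹ = [x, z, y].formPerm := by
  rw [← formPerm_reverse, ← formPerm_rotate _ (nodup_reverse.mpr h) 2]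
  rfl

theorem formPerm_three_rotate {x y z : α} (h : [x, y, z].Nodup) :
    [y, z, x].formPerm = [x, y, z].formPerm :=
  formPerm_rotate_one _ h

theorem formPerm_three_eq_mul {f x y z : α} (h : [f, x, y, z].Nodup) :
    [x, y, z].formPerm = [f, x, y].formPerm * [f, y, z].formPerm := by
  ext w
  rw [Perm.mul_apply, formPerm_three_apply (h.sublist (by simp)),
    formPerm_three_apply (h.sublist (by simp)), formPerm_three_apply (h.sublist (by simp))]
  simp only [nodup_cons, mem_cons, not_or, not_mem_nil, not_false_eq_true, and_true,
    nodup_nil] at h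
  obtain ⟨⟨hfx, hfy, hfz⟩, ⟨hxy, hxz⟩, hyz⟩ := h
  split_ifs <;> simp_all

theorem formPerm_three_eq_conj {f x y z : α} (h : [f, x, y, z].Nodup) :
    [f, x, z].formPerm =
      ([f, y, z].formPerm)⁻¹ * ([f, x, y].formPerm)⁻¹ * [f, y, z].formPerm := by
  simp only [nodup_cons, mem_cons, not_or, not_mem_nil, not_false_eq_true, and_true,
    nodup_nil] at h
  obtain ⟨⟨hfx, hfy, hfz⟩, ⟨hxy, hxz⟩, hyz⟩ := h
  have key := formPerm_map_conj ([f, y, z].formPerm)⁻¹ [f, y, x]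
  rw [inv_inv, formPerm_three_inv (by simp [*])] at key
  rw [formPerm_three_inv (by simp [*]), formPerm_three_inv (by simp [*]), ← key]
  simp only [map_cons, map_nil, formPerm_three_apply (show [f, z, y].Nodup by simp [*, Ne.symm])]
  simp only [if_pos, Ne.symm hfx, Ne.symm hfy, hxy, hxz, hyz, if_false]
  exact formPerm_three_rotate (x := z) (y := f) (z := x) (by simp [*, Ne.symm])

theorem isThreeCycle_formPerm_three [Fintype α] {x y z : α} (h : [x, y, z].Nodup) :
    [x, y, z].formPerm.IsThreeCycle := by
  rw [← card_support_eq_three_iff, support_formPerm_of_nodup _ h (by simp),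
    toFinset_card_of_nodup h, length]
  rfl

end List

namespace Equiv.Perm

section ThreeCycles

variable {α : Type*} [DecidableEq α]

theorem sq_swap_mul_swap {f x y : α} (h : [f, x, y].Nodup) :
    (swap f x * swap f y) ^ 2 = [f, x, y].formPerm := by
  ext w
  rw [List.formPerm_three_apply h, sq]
  simp only [List.nodup_cons, List.mem_cons, not_or, List.not_mem_nil] at h
  obtain ⟨⟨hfx, hfy⟩, hxy, -⟩ := h
  simp only [Perm.mul_apply, swap_apply_def]
  split_ifs <;> simp_all

theorem hasWordLE_formPerm_three {S : Set (Perm α)} {K : ℕ} (f : α)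
    (hf : ∀ x y, [f, x, y].Nodup → HasWordLE S K [f, x, y].formPerm) {x y z : α}
    (hnd : [x, y, z].Nodup) : HasWordLE S (2 * K) [x, y, z].formPerm := by
  have hnd' := hnd
  simp only [List.nodup_cons, List.mem_cons, not_or, List.not_mem_nil, not_false_eq_true,
    and_true, List.nodup_nil] at hnd'
  obtain ⟨⟨hxy, hxz⟩, hyz⟩ := hnd'
  by_cases hfx : f = x
  · subst hfx
    exact (hf y z hnd).mono (by omega)
  by_cases hfy : f = y
  · rw [← List.formPerm_three_rotate hnd, ← hfy]
    exact (hf z x (by simp [*, Ne.symm])).mono (by omega)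
  by_cases hfz : f = z
  · rw [List.formPerm_three_rotate (x := z) (y := x) (z := y) (by simp [*, Ne.symm]), ← hfz]
    exact (hf x y (by simp [*, Ne.symm])).mono (by omega)
  · rw [List.formPerm_three_eq_mul (f := f) (by simp [*]), two_mul]
    exact (hf x y (by simp [*])).mul (hf y z (by simp [*]))

variable [Fintype α]

theorem exists_isThreeCycle_card_support_inv_mul_lt {π : Perm α} (hπ : sign π = 1)
    (h1 : π ≠ 1) : ∃ τ : Perm α, τ.IsThreeCycle ∧ #(τ⁻¹ * π).support < #π.support := by
  obtain ⟨x, hx⟩ := nonempty_iff_ne_empty.mpr (support_eq_empty_iff.not.mpr h1)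
  have hxy : π x ≠ x := mem_support.mp hx
  have hpair : #{x, π x} < #π.support := by
    have h2 := two_le_card_support_of_ne_one h1
    have hne2 : #π.support ≠ 2 := fun h => by
      simp [(card_support_eq_two.mp h).sign_eq] at hπ
    rw [card_pair hxy.symm]
    omega
  obtain ⟨z, hz, hzxy⟩ := exists_mem_notMem_of_card_lt_card hpair
  simp only [mem_insert, mem_singleton, not_or] at hzxy
  have hnd : [x, π x, z].Nodup := by simp [hxy.symm, hzxy.1, hzxy.2, Ne.symm]
  refine ⟨_, List.isThreeCycle_formPerm_three hnd, card_lt_card ?_⟩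
  refine (ssubset_iff_of_subset fun w hw => ?_).mpr ⟨x, hx, ?_⟩
  · rcases mem_union.mp (support_mul_le _ _ hw) with hw | hw
    · rw [support_inv, List.support_formPerm_of_nodup _ hnd (by simp)] at hw
      simp only [List.mem_toFinset, List.mem_cons, List.not_mem_nil, or_false] at hw
      rcases hw with rfl | rfl | rfl
      exacts [hx, apply_mem_support.mpr hx, hz]
    · exact hw
  · rw [notMem_support, Perm.mul_apply, inv_eq_iff_eq, List.formPerm_three_apply hnd,
      if_pos rfl]

theorem hasWordLE_isThreeCycle_of_sign_eq_one {π : Perm α} (hπ : sign π = 1) :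
    HasWordLE {σ : Perm α | σ.IsThreeCycle} #π.support π := by
  induction hk : #π.support using Nat.strong_induction_on generalizing π with
  | _ k ih =>
    obtain rfl | h1 := eq_or_ne π 1
    · exact HasWordLE.one k
    obtain ⟨τ, hτ, hlt⟩ := exists_isThreeCycle_card_support_inv_mul_lt hπ h1
    have hrest := ih _ (hk ▸ hlt) (by simp [IsThreeCycle.sign hτ, hπ]) rfl
    have := (HasWordLE.of_mem (S := {σ : Perm α | σ.IsThreeCycle}) hτ).mul hrest
    rw [mul_inv_cancel_left] at this
    exact this.mono (by omega)

theorem hasWordLE_of_isThreeCycle {S : Set (Perm α)} {K : ℕ} (f : α)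
    (hf : ∀ x y, [f, x, y].Nodup → HasWordLE S K [f, x, y].formPerm) {σ : Perm α}
    (hσ : σ.IsThreeCycle) : HasWordLE S (2 * K) σ := by
  obtain ⟨x, hx⟩ := nonempty_iff_ne_empty.mpr (support_eq_empty_iff.not.mpr hσ.ne_one)
  rw [hσ.eq_swap_mul_swap_iff_mem_support.mpr hx, ← List.formPerm_pair (σ x),
    ← List.formPerm_cons_cons]
  exact hasWordLE_formPerm_three f hf (hσ.nodup_iff_mem_support.mpr hx)

end ThreeCycles

end Equiv.Perm

theorem sq_mul_mul_mul_eq_sq {G : Type*} [Group G] {a b s t : G} (has : Commute a s)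
    (hab : Commute a b) (hat : Commute a t) (hbs : Commute b s) (hbt : Commute b t)
    (ha : a ^ 2 = 1) (hb : b ^ 2 = 1) : (a * s * (b * t)) ^ 2 = (s * t) ^ 2 := by
  have hbst : s * (b * t) = b * (s * t) := by rw [← mul_assoc, ← hbs.eq, mul_assoc]
  rw [mul_assoc, hbst, (hab.mul_right (has.mul_right hat)).mul_pow,
    (hbs.mul_right hbt).mul_pow, ha, hb, one_mul, one_mul]

section Swaps

variable {α : Type*} [DecidableEq α]

theorem Equiv.swap_commute_swap {a b c d : α} (hac : a ≠ c) (had : a ≠ d) (hbc : b ≠ c)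
    (hbd : b ≠ d) : Commute (swap a b) (swap c d) := by
  ext w
  simp only [Perm.mul_apply, swap_apply_def]
  split_ifs <;> simp_all

theorem sq_swap_mul_swap_mul_swap_mul_swap {f u v a₁ a₂ b₁ b₂ : α} (h : [f, u, v].Nodup)
    (ha₁ : a₁ ∉ [f, u, v, b₁, b₂]) (ha₂ : a₂ ∉ [f, u, v, b₁, b₂]) (hb₁ : b₁ ∉ [f, u, v])
    (hb₂ : b₂ ∉ [f, u, v]) :
    (swap a₁ a₂ * swap f u * (swap b₁ b₂ * swap f v)) ^ 2 = [f, u, v].formPerm := by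
  simp only [List.mem_cons, List.not_mem_nil, or_false, not_or] at ha₁ ha₂ hb₁ hb₂
  rw [sq_mul_mul_mul_eq_sq (swap_commute_swap ha₁.1 ha₁.2.1 ha₂.1 ha₂.2.1)
    (swap_commute_swap ha₁.2.2.2.1 ha₁.2.2.2.2 ha₂.2.2.2.1 ha₂.2.2.2.2)
    (swap_commute_swap ha₁.1 ha₁.2.2.1 ha₂.1 ha₂.2.2.1)
    (swap_commute_swap hb₁.1 hb₁.2.1 hb₂.1 hb₂.2.1)
    (swap_commute_swap hb₁.1 hb₁.2.2 hb₂.1 hb₂.2.2) (by simp [sq]) (by simp [sq])]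
  exact sq_swap_mul_swap h

theorem conj_swap_mul_swap (σ : Perm α) (x y z w : α) :
    σ * (swap x y * swap z w) * σ⁻¹ = swap (σ x) (σ y) * swap (σ z) (σ w) := by
  rw [swap_apply_apply, swap_apply_apply]
  group

end Swaps

namespace ZMod

theorem natCast_ne_natCast_of_lt {m a b : ℕ} (hba : b < a) (ham : a < m) :
    (a : ZMod m) ≠ b := by
  rw [Ne, natCast_eq_natCast_iff', Nat.mod_eq_of_lt ham, Nat.mod_eq_of_lt (hba.trans ham)]
  exact hba.ne'

theorem natCast_ne_neg_natCast {m a b : ℕ} (hab : 0 < a + b) (habm : a + b < m) :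
    (a : ZMod m) ≠ -b := by
  rw [Ne, eq_neg_iff_add_eq_zero, ← Nat.cast_add, natCast_eq_zero_iff]
  exact fun h => (Nat.le_of_dvd hab h).not_gt habm

theorem natCast_notMem_neg_two_to_two {m k : ℕ} (hk : 3 ≤ k) (hkm : k + 3 ≤ m) :
    (k : ZMod m) ∉ ({-2, -1, 0, 1, 2} : Finset (ZMod m)) := by
  simp only [Finset.mem_insert, Finset.mem_singleton, not_or]
  refine ⟨?_, ?_, ?_, ?_, ?_⟩
  · simpa using natCast_ne_neg_natCast (b := 2) (by omega) (by omega)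
  · simpa using natCast_ne_neg_natCast (b := 1) (by omega) (by omega)
  · simpa using natCast_ne_natCast_of_lt (b := 0) (by omega) (by omega)
  · simpa using natCast_ne_natCast_of_lt (b := 1) (by omega) (by omega)
  · simpa using natCast_ne_natCast_of_lt (b := 2) (by omega) (by omega)

end ZMod

section CycleEnum

variable {X : Type*} {m : ℕ}

structure IsCycleEnum (δ : Perm X) (f : X) (P : ZMod m → X) : Prop where
  apply_succ : ∀ k, δ (P k) = P (k + 1)
  apply_fixed : δ f = f
  ne_fixed : ∀ k, P k ≠ f
  injective : Function.Injective P
  exists_eq : ∀ x, x ≠ f → ∃ k, P k = x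

variable {δ : Perm X} {f : X} {P : ZMod m → X}

namespace IsCycleEnum

theorem pow_apply (hP : IsCycleEnum δ f P) (j : ℕ) (k : ZMod m) :
    (δ ^ j) (P k) = P (k + j) := by
  induction j with
  | zero => simp
  | succ j ih => rw [pow_succ', Perm.mul_apply, ih, hP.apply_succ, Nat.cast_succ, add_assoc]

theorem pow_apply_fixed (hP : IsCycleEnum δ f P) (j : ℕ) : (δ ^ j) f = f :=
  pow_apply_eq_self_of_apply_eq_self hP.apply_fixed j

theorem nodup (hP : IsCycleEnum δ f P) {x y : ZMod m} (hxy : x ≠ y) : [f, P x, P y].Nodup := by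
  simp [hxy, hP.injective.ne_iff, (hP.ne_fixed _).symm]

end IsCycleEnum

variable [DecidableEq X] {S : Set (Perm X)}

def StepCycleLE (S : Set (Perm X)) (f : X) (P : ZMod m → X) (c : ℕ) (d : ZMod m) : Prop :=
  ∀ u, HasWordLE S c [f, P u, P (u + d)].formPerm

theorem StepCycleLE.mono {c₁ c₂ : ℕ} {d : ZMod m} (h : StepCycleLE S f P c₁ d)
    (hc : c₁ ≤ c₂) : StepCycleLE S f P c₂ d :=
  fun u => (h u).mono hc

namespace IsCycleEnum

theorem stepCycleLE_of_zero [NeZero m] (hP : IsCycleEnum δ f P) {k c : ℕ} {d : ZMod m}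
    (hδ : HasWordLE S k δ) (h : HasWordLE S c [f, P 0, P d].formPerm) :
    StepCycleLE S f P (c + 2 * k * m) d := by
  intro u
  have hconj := (hδ.pow u.val).conj h
  rw [← List.formPerm_map_conj] at hconj
  simp only [List.map_cons, List.map_nil, hP.pow_apply_fixed, hP.pow_apply, zero_add,
    ZMod.natCast_zmod_val, add_comm d] at hconj
  refine hconj.mono ?_
  have := u.val_lt
  nlinarith

theorem stepCycleLE_neg (hP : IsCycleEnum δ f P) {c : ℕ} {d : ZMod m}
    (h : StepCycleLE S f P c d) (hd : d ≠ 0) : StepCycleLE S f P c (-d) := by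
  intro u
  have := (h (u - d)).inv
  rwa [List.formPerm_three_inv (hP.nodup (by simpa using hd)), sub_add_cancel,
    sub_eq_add_neg] at this

theorem stepCycleLE_add (hP : IsCycleEnum δ f P) {c₁ c₂ : ℕ} {d₁ d₂ : ZMod m}
    (h₁ : StepCycleLE S f P c₁ d₁) (h₂ : StepCycleLE S f P c₂ d₂) (hd₁ : d₁ ≠ 0)
    (hd₂ : d₂ ≠ 0) (hd : d₁ + d₂ ≠ 0) : StepCycleLE S f P (c₁ + 2 * c₂) (d₁ + d₂) := by
  intro u
  have hnd : [f, P u, P (u + d₁), P (u + (d₁ + d₂))].Nodup := by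
    simp [hP.injective.ne_iff, (hP.ne_fixed _).symm, hd₁, hd₂, hd]
  rw [List.formPerm_three_eq_conj hnd]
  have := ((h₂ (u + d₁)).inv.mul (h₁ u).inv).mul (h₂ (u + d₁))
  rw [add_assoc u] at this
  exact this.mono (by omega)

theorem stepCycleLE_of_notMem [NeZero m] (hP : IsCycleEnum δ f P) {k k' : ℕ} {d : ZMod m}
    (hδ : HasWordLE S k δ) (h₁ : HasWordLE S k' (swap (P 1) (P (-1)) * swap f (P 0)))
    (h₂ : HasWordLE S k' (swap (P 0) (P (-2)) * swap f (P (-1))))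
    (hd : d ∉ ({-2, -1, 0, 1, 2} : Finset (ZMod m))) :
    StepCycleLE S f P (4 * k' + 6 * k * m) d := by
  simp only [Finset.mem_insert, Finset.mem_singleton, not_or] at hd
  obtain ⟨hd₂', hd₁', hd₀, hd₁, hd₂⟩ := hd
  have h10 : (1 : ZMod m) ≠ 0 := fun h => hd₀ (by simpa using congrArg (d * ·) h)
  have h10' : (-1 : ZMod m) ≠ 0 := neg_ne_zero.mpr h10
  have hshift := (hδ.pow (d + 1).val).conj h₂
  rw [conj_swap_mul_swap] at hshift
  simp only [hP.pow_apply_fixed, hP.pow_apply, ZMod.natCast_zmod_val] at hshift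
  rw [zero_add, show (-2 : ZMod m) + (d + 1) = d - 1 by ring,
    show (-1 : ZMod m) + (d + 1) = d by ring] at hshift
  have hsq := (h₁.mul hshift).pow 2
  -- The transpositions at `±1` and `d ± 1` avoid `f`, `P 0` and `P d` because `d ∉ [-2, 2]`.
  rw [sq_swap_mul_swap_mul_swap_mul_swap (hP.nodup (Ne.symm hd₀))
    (by simp [hP.injective.eq_iff, hP.ne_fixed]; grind)
    (by simp [hP.injective.eq_iff, hP.ne_fixed]; grind)
    (by simp [hP.injective.eq_iff, hP.ne_fixed]; grind)
    (by simp [hP.injective.eq_iff, hP.ne_fixed]; grind)] at hsq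
  have hj := (d + 1).val_lt
  refine (hP.stepCycleLE_of_zero hδ (hsq.mono (c₂ := 4 * k' + 4 * k * m) ?_)).mono ?_
  · nlinarith
  · nlinarith

theorem stepCycleLE_one_of_seven_le [NeZero m] (hm : 7 ≤ m) (hP : IsCycleEnum δ f P)
    {k k' : ℕ} (hδ : HasWordLE S k δ)
    (h₁ : HasWordLE S k' (swap (P 1) (P (-1)) * swap f (P 0)))
    (h₂ : HasWordLE S k' (swap (P 0) (P (-2)) * swap f (P (-1)))) :
    StepCycleLE S f P (3 * (4 * k' + 6 * k * m)) 1 := by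
  have h4 := hP.stepCycleLE_of_notMem hδ h₁ h₂
    (ZMod.natCast_notMem_neg_two_to_two (k := 4) (by norm_num) hm)
  have h3 := hP.stepCycleLE_of_notMem hδ h₁ h₂
    (ZMod.natCast_notMem_neg_two_to_two (k := 3) le_rfl (by omega))
  have h0 (j : ℕ) (hj : 0 < j) (hjm : j < m) : (j : ZMod m) ≠ 0 := by
    simpa using ZMod.natCast_ne_natCast_of_lt (b := 0) hj hjm
  have e : ((4 : ℕ) : ZMod m) + -((3 : ℕ) : ZMod m) = ((1 : ℕ) : ZMod m) := by
    push_cast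
    ring
  have := hP.stepCycleLE_add h4 (hP.stepCycleLE_neg h3 (h0 3 (by omega) (by omega)))
    (h0 4 (by omega) (by omega)) (neg_ne_zero.mpr (h0 3 (by omega) (by omega)))
    (e ▸ h0 1 (by omega) (by omega))
  rw [e, Nat.cast_one] at this
  exact this.mono (by omega)

theorem stepCycleLE_of_ne_zero [NeZero m] (hP : IsCycleEnum δ f P) {k k' : ℕ}
    (hδ : HasWordLE S k δ) (h₁ : HasWordLE S k' (swap (P 1) (P (-1)) * swap f (P 0)))
    (h₂ : HasWordLE S k' (swap (P 0) (P (-2)) * swap f (P (-1))))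
    (hone : StepCycleLE S f P (3 * (4 * k' + 6 * k * m)) 1) {d : ZMod m} (hd : d ≠ 0) :
    StepCycleLE S f P (9 * (4 * k' + 6 * k * m)) d := by
  by_cases hnear : d ∈ ({-2, -1, 0, 1, 2} : Finset (ZMod m))
  · have h10 : (1 : ZMod m) ≠ 0 := fun h => hd (by simpa using congrArg (d * ·) h)
    have htwo (h2 : (2 : ZMod m) ≠ 0) : StepCycleLE S f P (9 * (4 * k' + 6 * k * m)) 2 := by
      have := hP.stepCycleLE_add hone hone h10 h10 (by rwa [one_add_one_eq_two])
      rw [one_add_one_eq_two] at this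
      exact this.mono (by omega)
    simp only [Finset.mem_insert, Finset.mem_singleton] at hnear
    rcases hnear with rfl | rfl | rfl | rfl | rfl
    · have h2 : (2 : ZMod m) ≠ 0 := by simpa using hd
      exact hP.stepCycleLE_neg (htwo h2) h2
    · exact (hP.stepCycleLE_neg hone h10).mono (by omega)
    · exact absurd rfl hd
    · exact hone.mono (by omega)
    · exact htwo hd
  · exact (hP.stepCycleLE_of_notMem hδ h₁ h₂ hnear).mono (by omega)

theorem hasWordLE_formPerm_fixed (hP : IsCycleEnum δ f P) {K : ℕ}
    (h : ∀ d : ZMod m, d ≠ 0 → StepCycleLE S f P K d) {x y : X} (hxy : [f, x, y].Nodup) :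
    HasWordLE S K [f, x, y].formPerm := by
  simp only [List.nodup_cons, List.mem_cons, not_or, List.not_mem_nil, not_false_eq_true,
    and_true, List.nodup_nil] at hxy
  obtain ⟨⟨hfx, hfy⟩, hxy⟩ := hxy
  obtain ⟨u, rfl⟩ := hP.exists_eq x (Ne.symm hfx)
  obtain ⟨v, rfl⟩ := hP.exists_eq y (Ne.symm hfy)
  simpa using h (v - u) (sub_ne_zero.mpr fun h => hxy (by rw [h])) u

theorem hasWordLE_of_sign_eq_one [Fintype X] [NeZero m] (hP : IsCycleEnum δ f P) {k k' : ℕ}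
    (hδ : HasWordLE S k δ) (h₁ : HasWordLE S k' (swap (P 1) (P (-1)) * swap f (P 0)))
    (h₂ : HasWordLE S k' (swap (P 0) (P (-2)) * swap f (P (-1))))
    (hone : StepCycleLE S f P (3 * (4 * k' + 6 * k * m)) 1) {π : Perm X} (hπ : sign π = 1) :
    HasWordLE S (Fintype.card X * (18 * (4 * k' + 6 * k * m))) π := by
  have hthree (σ : Perm X) (hσ : σ.IsThreeCycle) :
      HasWordLE S (2 * (9 * (4 * k' + 6 * k * m))) σ :=
    hasWordLE_of_isThreeCycle f (fun x y => hP.hasWordLE_formPerm_fixed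
      (fun d hd => hP.stepCycleLE_of_ne_zero hδ h₁ h₂ hone hd)) hσ
  refine ((hasWordLE_isThreeCycle_of_sign_eq_one hπ).bind hthree).mono ?_
  rw [← mul_assoc 2]
  exact Nat.mul_le_mul_right _ (card_le_univ _)

end IsCycleEnum

end CycleEnum

namespace List

theorem map_val_take_finRange {n k : ℕ} (h : k ≤ n) :
    ((finRange n).take k).map Fin.val = range' 0 k := by
  rw [map_take]
  simp [range_eq_range', take_range'_of_length_ge h]

theorem map_val_drop_finRange (n k : ℕ) :
    ((finRange n).drop k).map Fin.val = range' k (n - k) := by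
  rw [map_drop]
  simp [range_eq_range', drop_range']

theorem val_formPerm_of_map_val_eq_range' {n i k : ℕ} {l : List (Fin n)}
    (hl : l.map Fin.val = range' i k) (x : Fin n) :
    (l.formPerm x : ℕ) =
      if i ≤ x ∧ x < i + k then (if x + 1 = i + k then i else x + 1) else x := by
  have hlen : l.length = k := by simpa using congrArg length hl
  have hget (j : ℕ) (hj : j < l.length) : (l[j] : ℕ) = i + j := by
    rw [← getElem_map Fin.val, getElem_of_eq hl, getElem_range', one_mul]
    simpa using hj
  by_cases hx : i ≤ x ∧ x < i + k
  · rw [if_pos hx]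
    have hidx : l[(x : ℕ) - i]'(by omega) = x := Fin.ext (by rw [hget]; omega)
    have := formPerm_apply_getElem l (Nodup.of_map Fin.val (hl ▸ nodup_range')) (x - i)
      (by omega)
    rw [hidx] at this
    rw [this, hget, hlen]
    split_ifs with hlast
    · rw [show (x : ℕ) - i + 1 = k by omega, Nat.mod_self, add_zero]
    · rw [Nat.mod_eq_of_lt (by omega)]
      omega
  · rw [if_neg hx, formPerm_apply_of_notMem]
    intro hmem
    have := mem_map_of_mem (f := Fin.val) hmem
    rw [hl, mem_range'_1] at this
    exact hx this

theorem val_formPerm_inv_of_map_val_eq_range' {n i k : ℕ} {l : List (Fin n)}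
    (hl : l.map Fin.val = range' i k) (x : Fin n) :
    (l.formPerm⁻¹ x : ℕ) =
      if i ≤ x ∧ x < i + k then (if x = i then i + k - 1 else x - 1) else x := by
  have h := val_formPerm_of_map_val_eq_range' hl (l.formPerm⁻¹ x)
  rw [← Perm.mul_apply, mul_inv_cancel, Perm.one_apply] at h
  split_ifs at h ⊢ <;> omega

end List

theorem Fin.val_swap_apply {n : ℕ} (p q x : Fin n) :
    (swap p q x : ℕ) =
      if (x : ℕ) = p then (q : ℕ) else if (x : ℕ) = q then (p : ℕ) else (x : ℕ) := by
  rw [swap_apply_def]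
  split_ifs <;> simp_all [Fin.ext_iff]

section TwoConnected

variable {a b : ℕ}

theorem val_twoConnAlpha (hb : 2 ≤ b) (x : Fin (a + b - 2)) :
    (twoConnAlpha a b x : ℕ) =
      if (x : ℕ) < a then (if (x : ℕ) + 1 = a then 0 else (x : ℕ) + 1) else (x : ℕ) := by
  rw [twoConnAlpha, List.val_formPerm_of_map_val_eq_range' (List.map_val_take_finRange (by omega))]
  simp

theorem val_twoConnBeta (x : Fin (a + b - 2)) :
    (twoConnBeta a b x : ℕ) =
      if a - 2 ≤ (x : ℕ) then (if (x : ℕ) + 1 = a + b - 2 then a - 2 else (x : ℕ) + 1)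
      else (x : ℕ) := by
  rw [twoConnBeta, List.val_formPerm_of_map_val_eq_range' (List.map_val_drop_finRange _ _)]
  have := x.isLt
  split_ifs <;> omega

theorem val_twoConnBeta_inv (x : Fin (a + b - 2)) :
    ((twoConnBeta a b)⁻¹ x : ℕ) =
      if a - 2 ≤ (x : ℕ) then (if (x : ℕ) = a - 2 then a + b - 3 else (x : ℕ) - 1)
      else (x : ℕ) := by
  rw [twoConnBeta,
    List.val_formPerm_inv_of_map_val_eq_range' (List.map_val_drop_finRange _ _)]
  have := x.isLt
  split_ifs <;> omega

theorem hasWordLE_twoConnAlpha_mul_inv :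
    HasWordLE {twoConnAlpha a b, twoConnBeta a b} 2 (twoConnAlpha a b * (twoConnBeta a b)⁻¹) :=
  (HasWordLE.of_mem (by simp)).mul (HasWordLE.of_mem (by simp)).inv

/-- `α β⁻¹` fixes `a - 1` and runs through `0 → 1 → ⋯ → a-2 → n-1 → n-2 → ⋯ → a → 0`;
`twoConnOrbit a b k` is the `k`-th point of this cycle. -/
def twoConnOrbit (a b : ℕ) [NeZero (a + b - 3)] (k : ZMod (a + b - 3)) : Fin (a + b - 2) :=
  ⟨if k.val ≤ a - 2 then k.val else 2 * a + b - 4 - k.val, by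
    have := k.val_lt
    split_ifs <;> omega⟩

variable [NeZero (a + b - 3)]

theorem val_twoConnOrbit_natCast {j : ℕ} (hj : j < a + b - 3) :
    (twoConnOrbit a b j : ℕ) = if j ≤ a - 2 then j else 2 * a + b - 4 - j := by
  simp only [twoConnOrbit, ZMod.val_cast_of_lt hj]

theorem val_twoConnOrbit_neg_natCast (ha : 2 ≤ a) {j : ℕ} (hj : 0 < j) (hjb : j ≤ b - 2) :
    (twoConnOrbit a b (-j) : ℕ) = a - 1 + j := by
  have hm : j ≤ a + b - 3 := by omega
  rw [← zero_sub, ← ZMod.natCast_self, ← Nat.cast_sub hm,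
    val_twoConnOrbit_natCast (j := a + b - 3 - j) (by omega)]
  split_ifs <;> omega

theorem val_twoConnOrbit_zero : (twoConnOrbit a b 0 : ℕ) = 0 := by
  simp [twoConnOrbit]

theorem val_twoConnOrbit_one (ha : 3 ≤ a) (hb : 2 ≤ b) : (twoConnOrbit a b 1 : ℕ) = 1 := by
  have := val_twoConnOrbit_natCast (a := a) (b := b) (j := 1) (by omega)
  rwa [Nat.cast_one, if_pos (by omega)] at this

theorem val_twoConnOrbit_neg_one (ha : 2 ≤ a) (hb : 3 ≤ b) :
    (twoConnOrbit a b (-1) : ℕ) = a := by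
  have := val_twoConnOrbit_neg_natCast (a := a) (b := b) (j := 1) ha one_pos (by omega)
  rwa [Nat.cast_one, Nat.sub_add_cancel (by omega)] at this

theorem val_twoConnOrbit_neg_two (ha : 2 ≤ a) (hb : 4 ≤ b) :
    (twoConnOrbit a b (-2) : ℕ) = a + 1 := by
  have := val_twoConnOrbit_neg_natCast (a := a) (b := b) (j := 2) ha two_pos (by omega)
  rw [Nat.cast_ofNat] at this
  omega

theorem val_twoConnOrbit_sub_two (ha : 2 ≤ a) (hb : 2 ≤ b) :
    (twoConnOrbit a b (a - 2 : ℕ) : ℕ) = a - 2 := by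
  rw [val_twoConnOrbit_natCast (by omega), if_pos le_rfl]

theorem isCycleEnum_twoConnOrbit (ha : 2 ≤ a) (hb : 2 ≤ b) (f : Fin (a + b - 2))
    (hf : (f : ℕ) = a - 1) :
    IsCycleEnum (twoConnAlpha a b * (twoConnBeta a b)⁻¹) f (twoConnOrbit a b) where
  apply_succ k := by
    obtain ⟨j, hj, rfl⟩ : ∃ j < a + b - 3, (j : ZMod (a + b - 3)) = k :=
      ⟨k.val, k.val_lt, k.natCast_zmod_val⟩
    apply Fin.ext
    rw [Perm.mul_apply, val_twoConnAlpha hb, val_twoConnBeta_inv, val_twoConnOrbit_natCast hj,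
      show (j : ZMod (a + b - 3)) + 1 = ((j + 1 : ℕ) : ZMod (a + b - 3)) by push_cast; rfl]
    rcases (by omega : j + 1 < a + b - 3 ∨ j + 1 = a + b - 3) with h | h
    · rw [val_twoConnOrbit_natCast h]
      split_ifs <;> omega
    · rw [h, ZMod.natCast_self]
      simp only [twoConnOrbit, ZMod.val_zero]
      split_ifs <;> omega
  apply_fixed := by
    apply Fin.ext
    rw [Perm.mul_apply, val_twoConnAlpha hb, val_twoConnBeta_inv, hf]
    split_ifs <;> omega
  ne_fixed k h := by
    have hk := k.val_lt
    have := congrArg Fin.val h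
    simp only [twoConnOrbit, hf] at this
    split_ifs at this <;> omega
  injective k k' h := by
    have hk := k.val_lt
    have hk' := k'.val_lt
    have := congrArg Fin.val h
    simp only [twoConnOrbit] at this
    apply ZMod.val_injective
    split_ifs at this <;> omega
  exists_eq x hx := by
    have hx' : (x : ℕ) ≠ a - 1 := fun h => hx (Fin.ext (h.trans hf.symm))
    have := x.isLt
    refine ⟨((if (x : ℕ) ≤ a - 2 then x else 2 * a + b - 4 - x : ℕ) : ZMod (a + b - 3)),
      Fin.ext ?_⟩
    rw [val_twoConnOrbit_natCast (by split_ifs <;> omega)]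
    split_ifs <;> omega

theorem twoConn_commutator (ha : 3 ≤ a) (hb : 3 ≤ b) (f : Fin (a + b - 2))
    (hf : (f : ℕ) = a - 1) :
    twoConnAlpha a b * twoConnBeta a b * (twoConnAlpha a b)⁻¹ * (twoConnBeta a b)⁻¹ =
      swap (twoConnOrbit a b 0) (twoConnOrbit a b (-1)) *
        swap (twoConnOrbit a b (a - 2 : ℕ)) f := by
  rw [mul_inv_eq_iff_eq_mul, mul_inv_eq_iff_eq_mul]
  ext x
  simp only [Perm.mul_apply, val_twoConnAlpha (by omega : 2 ≤ b), val_twoConnBeta,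
    Fin.val_swap_apply, val_twoConnOrbit_zero, val_twoConnOrbit_neg_one (by omega : 2 ≤ a) hb,
    val_twoConnOrbit_sub_two (by omega : 2 ≤ a) (by omega : 2 ≤ b), hf]
  have := x.isLt
  rcases (by omega : (x : ℕ) + 3 < a ∨ (x : ℕ) + 3 = a ∨ (x : ℕ) + 2 = a ∨ (x : ℕ) + 1 = a ∨
    (a ≤ (x : ℕ) ∧ (x : ℕ) + 1 < a + b - 2) ∨ (x : ℕ) + 1 = a + b - 2) with h | h | h | h | h | h
  all_goals simp (disch := omega) only [if_pos, if_neg, if_true]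
  all_goals omega

theorem twoConnAlpha_conj_commutator (ha : 3 ≤ a) (hb : 3 ≤ b) (f : Fin (a + b - 2))
    (hf : (f : ℕ) = a - 1) :
    twoConnAlpha a b *
        (twoConnAlpha a b * twoConnBeta a b * (twoConnAlpha a b)⁻¹ * (twoConnBeta a b)⁻¹) *
        (twoConnAlpha a b)⁻¹ =
      swap (twoConnOrbit a b 1) (twoConnOrbit a b (-1)) * swap f (twoConnOrbit a b 0) := by
  rw [twoConn_commutator ha hb f hf, conj_swap_mul_swap]
  congr 2 <;> apply Fin.ext <;>
    simp only [val_twoConnAlpha (by omega : 2 ≤ b), val_twoConnOrbit_zero,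
      val_twoConnOrbit_one ha (by omega : 2 ≤ b), val_twoConnOrbit_neg_one (by omega : 2 ≤ a) hb,
      val_twoConnOrbit_sub_two (by omega : 2 ≤ a) (by omega : 2 ≤ b), hf] <;>
    split_ifs <;> omega

theorem twoConnBeta_conj_commutator (ha : 3 ≤ a) (hb : 4 ≤ b) (f : Fin (a + b - 2))
    (hf : (f : ℕ) = a - 1) :
    twoConnBeta a b *
        (twoConnAlpha a b * twoConnBeta a b * (twoConnAlpha a b)⁻¹ * (twoConnBeta a b)⁻¹) *
        (twoConnBeta a b)⁻¹ =
      swap (twoConnOrbit a b 0) (twoConnOrbit a b (-2)) * swap f (twoConnOrbit a b (-1)) := by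
  rw [twoConn_commutator ha (by omega) f hf, conj_swap_mul_swap]
  congr 2 <;> apply Fin.ext <;>
    simp only [val_twoConnBeta, val_twoConnOrbit_zero,
      val_twoConnOrbit_neg_two (by omega : 2 ≤ a) hb,
      val_twoConnOrbit_neg_one (by omega : 2 ≤ a) (by omega : 3 ≤ b),
      val_twoConnOrbit_sub_two (by omega : 2 ≤ a) (by omega : 2 ≤ b), hf] <;>
    split_ifs <;> omega

set_option maxRecDepth 10000 in
theorem twoConnBeta_mul_twoConnAlpha_four_five_pow_four :
    (twoConnBeta 4 5 * twoConnAlpha 4 5) ^ 4 = [⟨3, by norm_num⟩, 0, 1].formPerm := by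
  decide

/-- For `(a, b) = (4, 5)` the cycle of `α β⁻¹` has length 6, too short to write the distance 1
as a sum of distances outside `[-2, 2]`. -/
theorem twoConn_stepCycleLE_one_four_five :
    StepCycleLE {twoConnAlpha 4 5, twoConnBeta 4 5} ⟨3, by norm_num⟩ (twoConnOrbit 4 5)
      (8 + 2 * 2 * (4 + 5 - 3)) 1 := by
  have hP := isCycleEnum_twoConnOrbit (a := 4) (b := 5) (by norm_num) (by norm_num)
    ⟨3, by norm_num⟩ rfl
  refine hP.stepCycleLE_of_zero hasWordLE_twoConnAlpha_mul_inv ?_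
  rw [show twoConnOrbit 4 5 0 = 0 from rfl, show twoConnOrbit 4 5 1 = 1 from rfl,
    ← twoConnBeta_mul_twoConnAlpha_four_five_pow_four]
  exact ((HasWordLE.of_mem (by simp)).mul (HasWordLE.of_mem (by simp))).pow 4

end TwoConnected

theorem twoConn_hasWordLE_of_sign_eq_one {a b : ℕ} (ha : 4 ≤ a) (hb : 5 ≤ b)
    {π : Perm (Fin (a + b - 2))} (hπ : sign π = 1) :
    HasWordLE {twoConnAlpha a b, twoConnBeta a b} (432 * (a + b - 2) ^ 2) π := by
  have : NeZero (a + b - 3) := ⟨by omega⟩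
  set f : Fin (a + b - 2) := ⟨a - 1, by omega⟩
  have hP := isCycleEnum_twoConnOrbit (by omega) (by omega) f rfl
  have hα : HasWordLE {twoConnAlpha a b, twoConnBeta a b} 1 (twoConnAlpha a b) :=
    .of_mem (by simp)
  have hβ : HasWordLE {twoConnAlpha a b, twoConnBeta a b} 1 (twoConnBeta a b) :=
    .of_mem (by simp)
  have hcomm := ((hα.mul hβ).mul hα.inv).mul hβ.inv
  have h₁ := hα.conj hcomm
  rw [twoConnAlpha_conj_commutator (by omega) (by omega) f rfl] at h₁
  have h₂ := hβ.conj hcomm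
  rw [twoConnBeta_conj_commutator (by omega) (by omega) f rfl] at h₂
  have hone : StepCycleLE {twoConnAlpha a b, twoConnBeta a b} f (twoConnOrbit a b)
      (3 * (4 * (1 + (1 + 1 + 1 + 1) + 1) + 6 * 2 * (a + b - 3))) 1 := by
    rcases (by omega : (a = 4 ∧ b = 5) ∨ 7 ≤ a + b - 3) with ⟨rfl, rfl⟩ | hm
    · exact twoConn_stepCycleLE_one_four_five.mono (by norm_num)
    · exact hP.stepCycleLE_one_of_seven_le hm hasWordLE_twoConnAlpha_mul_inv h₁ h₂
  refine (hP.hasWordLE_of_sign_eq_one hasWordLE_twoConnAlpha_mul_inv h₁ h₂ hone hπ).mono ?_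
  rw [Fintype.card_fin]
  have : a + b - 3 + 1 = a + b - 2 := by omega
  nlinarith

/-- There is a constant `C` such that for all `a ≥ 4` and `b ≥ 5` with
`n = a + b - 2`, every even permutation of `{1,…,n}` is a product of at most `C * n ^ 2`
elements of `{α, α⁻¹, β, β⁻¹}`, where `α, β` are the generators of the 2-connected
`(a,b)`-puzzle. In particular, the subgroup generated by `{α, β}` contains the
alternating group. -/
theorem twoConnected_a4_b5_puzzle_generates_even :
    ∃ C : ℕ, ∀ a b : ℕ, 4 ≤ a → 5 ≤ b →
      (∀ π : Equiv.Perm (Fin (a + b - 2)), Equiv.Perm.sign π = 1 →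
        ∃ l : List (Equiv.Perm (Fin (a + b - 2))),
          l.length ≤ C * (a + b - 2) ^ 2 ∧
          (∀ g ∈ l,
            g = twoConnAlpha a b ∨ g = (twoConnAlpha a b)⁻¹ ∨
            g = twoConnBeta a b ∨ g = (twoConnBeta a b)⁻¹) ∧
          l.prod = π) ∧
      alternatingGroup (Fin (a + b - 2)) ≤
        Subgroup.closure
          ({twoConnAlpha a b, twoConnBeta a b} : Set (Equiv.Perm (Fin (a + b - 2)))) := by
  refine ⟨432, fun a b ha hb => ⟨fun π hπ => ?_, fun π hπ => ?_⟩⟩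
  · obtain ⟨l, hl, hgen, hprod⟩ := twoConn_hasWordLE_of_sign_eq_one ha hb hπ
    refine ⟨l, hl, fun g hg => ?_, hprod⟩
    have := hgen g hg
    simp only [Set.mem_insert_iff, Set.mem_singleton_iff, inv_eq_iff_eq_inv] at this
    tauto
  · exact (twoConn_hasWordLE_of_sign_eq_one ha hb (mem_alternatingGroup.mp hπ)).mem_closure
end

section
/- Let H be the subgroup of the symmetric group S_6 on {1,…,6} generated by α = (1 2 3 4) and β = (3 4 5 6). Then H has exactly 120 elements, and H is isomorphic (as a group) to the symmetric group S_5. -/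
/-!
Conjugation by α and β permutes the five synthemes `t₀, …, t₄` of a total of `S₆`, where `t_k` is
the fixed-point-free involution matching `0` with `k + 1`, so `H = ⟨α, β⟩` acts on a five-element
set. Only the identity of `S₆` commutes with all five, so the action is faithful; and `α⁻¹β` acts
as an element of order 5 while `αβα⁻¹βα` acts as a transposition, which together generate `S₅`.
Hence `H ≅ S₅`, and in particular `|H| = 120`.
-/

open Equiv Equiv.Perm Subgroup

namespace Subgroup

variable {G : Type*} [Group G] (S : Set G)

def normalizerConjPerm : normalizer S →* Perm S where
  toFun g := Perm.subtypePerm (MulAut.conj (g : G)).toEquiv fun x => (g.2 x).symm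
  map_one' := by ext; simp
  map_mul' g h := by
    ext x
    change (g * h : G) * x * (g * h : G)⁻¹ = g * (h * x * (h : G)⁻¹) * (g : G)⁻¹
    group

variable {S}

theorem normalizerConjPerm_injective (h : centralizer S = ⊥) :
    Function.Injective (normalizerConjPerm S) := by
  rw [injective_iff_map_eq_one]
  intro g hg
  have hgS : (g : G) ∈ centralizer S := fun x hx =>
    eq_mul_inv_iff_mul_eq.mp (congrArg (fun σ : Perm S => (σ ⟨x, hx⟩ : G)) hg).symm
  rw [h, mem_bot] at hgS
  exact Subtype.ext hgS

end Subgroup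

theorem Equiv.Perm.closure_eq_top_of_pow_card_eq_one {α : Type*} [Fintype α] [DecidableEq α]
    {σ τ : Perm α} (hp : (Fintype.card α).Prime) (hσ : σ ^ Fintype.card α = 1) (hσ1 : σ ≠ 1)
    (hτ : IsSwap τ) : closure ({σ, τ} : Set (Perm α)) = ⊤ := by
  have := Fact.mk hp
  have hord := orderOf_eq_prime hσ hσ1
  have hcycle := isCycle_of_prime_order'' hp hord
  exact closure_prime_cycle_swap hp hcycle (Finset.eq_univ_of_card _ (hcycle.orderOf ▸ hord)) hτ

namespace FourFourPuzzle

def α : Perm (Fin 6) := List.formPerm [0, 1, 2, 3]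

def β : Perm (Fin 6) := List.formPerm [2, 3, 4, 5]

/-- A total in Sylvester's sense: five synthemes (perfect matchings of `Fin 6`, written as
involutions) such that every pair of points is matched in exactly one of them. -/
def total : Finset (Perm (Fin 6)) :=
  {swap 0 1 * swap 2 4 * swap 3 5, swap 0 2 * swap 1 3 * swap 4 5, swap 0 3 * swap 1 4 * swap 2 5,
    swap 0 4 * swap 1 5 * swap 2 3, swap 0 5 * swap 1 2 * swap 3 4}

theorem card_total : Fintype.card (total : Set (Perm (Fin 6))) = 5 := by
  simp only [Finset.coe_sort_coe, Fintype.card_coe]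
  decide

theorem centralizer_total : centralizer (total : Set (Perm (Fin 6))) = ⊥ := by
  have : ∀ g : Perm (Fin 6), (∀ t ∈ total, t * g = g * t) → g = 1 := by decide +kernel
  exact eq_bot_iff.2 fun g hg => this g hg

theorem closure_le_normalizer : closure {α, β} ≤ normalizer (total : Set (Perm (Fin 6))) := by
  rw [closure_le, Set.insert_subset_iff, Set.singleton_subset_iff]
  exact ⟨mem_normalizer_fintype (by decide +kernel), mem_normalizer_fintype (by decide +kernel)⟩

def α' : closure {α, β} := ⟨α, subset_closure (Set.mem_insert _ _)⟩

def β' : closure {α, β} := ⟨β, subset_closure (Set.mem_insert_of_mem _ rfl)⟩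

def conjPerm : closure {α, β} →* Perm (total : Set (Perm (Fin 6))) :=
  (normalizerConjPerm _).comp (inclusion closure_le_normalizer)

theorem conjPerm_injective : Function.Injective conjPerm :=
  (normalizerConjPerm_injective centralizer_total).comp (inclusion_injective closure_le_normalizer)

theorem conjPerm_surjective : Function.Surjective conjPerm := by
  have hσ : conjPerm (α'⁻¹ * β') ^ 5 = 1 := by decide +kernel
  have hσ1 : conjPerm (α'⁻¹ * β') ≠ 1 := by decide +kernel
  have hτ : IsSwap (conjPerm (α' * β' * α'⁻¹ * β' * α')) :=
    ⟨⟨swap 0 2 * swap 1 3 * swap 4 5, by decide⟩, ⟨swap 0 4 * swap 1 5 * swap 2 3, by decide⟩,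
      by decide, by decide +kernel⟩
  rw [← MonoidHom.range_eq_top, eq_top_iff,
    ← closure_eq_top_of_pow_card_eq_one (card_total ▸ Nat.prime_five) (card_total ▸ hσ) hσ1 hτ,
    closure_le]
  rintro _ (rfl | rfl) <;> exact MonoidHom.mem_range.2 ⟨_, rfl⟩

noncomputable def mulEquivPermFinFive : closure {α, β} ≃* Perm (Fin 5) :=
  (MulEquiv.ofBijective conjPerm ⟨conjPerm_injective, conjPerm_surjective⟩).trans
    (permCongrHom (Fintype.equivFinOfCardEq card_total))

end FourFourPuzzle

/-- Let `H` be the subgroup of the symmetric group on `{1,…,6}` (modeled as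
`Fin 6`) generated by `α = (1 2 3 4)` and `β = (3 4 5 6)` (0-indexed: `(0 1 2 3)` and
`(2 3 4 5)`). Then `H` has exactly 120 elements and is isomorphic to the symmetric group
`S₅`. -/
theorem twoConnected_four_four_puzzle_group :
    Nat.card
      (Subgroup.closure
        ({List.formPerm [(0 : Fin 6), 1, 2, 3],
          List.formPerm [(2 : Fin 6), 3, 4, 5]} : Set (Equiv.Perm (Fin 6)))) = 120 ∧
    Nonempty
      ((Subgroup.closure
        ({List.formPerm [(0 : Fin 6), 1, 2, 3],
          List.formPerm [(2 : Fin 6), 3, 4, 5]} : Set (Equiv.Perm (Fin 6)))) ≃*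
        Equiv.Perm (Fin 5)) := by
  have e := FourFourPuzzle.mulEquivPermFinFive
  refine ⟨(Nat.card_congr e.toEquiv).trans ?_, ⟨e⟩⟩
  rw [Nat.card_perm, Nat.card_fin]
  rfl
end

section
/- There exists a group automorphism ψ of the symmetric group S_6 on {1,…,6} satisfying ψ((1 2)) = (1 5)(2 3)(4 6), ψ((1 3)) = (1 4)(2 6)(3 5), ψ((1 4)) = (1 3)(2 4)(5 6), ψ((1 5)) = (1 2)(3 6)(4 5), ψ((1 6)) = (1 6)(2 5)(3 4), such that for every permutation π of {1,…,6}: π belongs to the subgroup generated by α = (1 2 3 4) and β = (3 4 5 6) if and only if ψ(π)(4) = 4. -/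
/-!
A syntheme is a partition of the six points into three pairs, and a synthematic total is a set
of five synthemes that together use all fifteen pairs. The stabilizer of a total is a transitive
copy of `S₅` of index 6, so the action of `S₆` on its six cosets is a homomorphism
`ψ : S₆ → S₆`; it hits a 6-cycle and an adjacent transposition, so it is onto, hence an
automorphism (the outer one, since it sends transpositions to triple transpositions).
Everything about `ψ` is then a finite check: `ψ σ = τ` holds iff `cosetRep (τ i)⁻¹ σ cosetRep i`
stabilizes the total for every `i`. In particular `ψ α` and `ψ β` are two 4-cycles fixing `3`
(the fourth point), and short words in them give the transpositions `(0 a)`, `a ≠ 3`, which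
generate the point stabilizer of `3`; so `ψ` maps `⟨α, β⟩` onto that stabilizer.
-/

open Equiv MulAction Subgroup Pointwise

namespace Subgroup

variable {G ι : Type*} [Group G] {H : Subgroup G} {r : ι → G}

theorem surjective_mk_comp_of_closure_eq_top [Finite G] {T : Set G} (hT : closure T = ⊤)
    (hTr : ∀ t ∈ T, ∀ i, ∃ j, (r j)⁻¹ * (t * r i) ∈ H) (i₀ : ι) :
    Function.Surjective fun i ↦ (r i : G ⧸ H) := by
  let M : Submonoid G :=
    { carrier := {g | ∀ i, ∃ j, (r j)⁻¹ * (g * r i) ∈ H}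
      one_mem' := fun i ↦ ⟨i, by simp⟩
      mul_mem' := by
        rintro g g' hg hg' i
        obtain ⟨j, hj⟩ := hg' i
        obtain ⟨k, hk⟩ := hg j
        exact ⟨k, by simpa [mul_assoc] using H.mul_mem hk hj⟩ }
  -- in a finite group the generated subgroup is the generated submonoid
  have hM : ∀ g, g ∈ M := fun g ↦ (Submonoid.closure_le (S := M)).mpr hTr <| by
    rw [← closure_toSubmonoid_of_finite, hT]
    trivial
  rintro ⟨g⟩
  obtain ⟨j, hj⟩ := hM (g * (r i₀)⁻¹) i₀
  exact ⟨j, QuotientGroup.eq.mpr (by simpa using hj)⟩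

noncomputable def transversalPerm (hr : Function.Bijective fun i ↦ (r i : G ⧸ H)) :
    G →* Perm ι :=
  (Equiv.ofBijective _ hr).symm.permCongrHom.toMonoidHom.comp (toPermHom G (G ⧸ H))

theorem transversalPerm_apply_eq_iff (hr : Function.Bijective fun i ↦ (r i : G ⧸ H))
    {g : G} {i j : ι} : transversalPerm hr g i = j ↔ (r j)⁻¹ * (g * r i) ∈ H := by
  rw [← QuotientGroup.eq, eq_comm (a := (r j : G ⧸ H))]
  exact (Equiv.ofBijective _ hr).symm_apply_eq

theorem transversalPerm_eq_iff (hr : Function.Bijective fun i ↦ (r i : G ⧸ H))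
    {g : G} {σ : Perm ι} : transversalPerm hr g = σ ↔ ∀ i, (r (σ i))⁻¹ * (g * r i) ∈ H := by
  simp only [Equiv.ext_iff, transversalPerm_apply_eq_iff]

end Subgroup

namespace Equiv.Perm

variable {α : Type*} [DecidableEq α] [Finite α]

theorem stabilizer_le_of_forall_swap_mem {H : Subgroup (Perm α)} {x c : α}
    (h : ∀ a ≠ x, swap c a ∈ H) : stabilizer (Perm α) x ≤ H := by
  have hswap : ∀ a b, a ≠ x → b ≠ x → swap a b ∈ H := by
    intro a b ha hb
    rcases eq_or_ne a c with rfl | hac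
    · exact h b hb
    rcases eq_or_ne b c with rfl | hbc
    · exact swap_comm a b ▸ h a ha
    rcases eq_or_ne b a with rfl | hba
    · rw [swap_self]
      exact H.one_mem
    rw [← swap_mul_swap_mul_swap hbc hba]
    exact H.mul_mem (H.mul_mem (h a ha) (swap_comm c b ▸ h b hb)) (h a ha)
  intro σ hσ
  rw [mem_stabilizer_iff, Perm.smul_def] at hσ
  let S : Set (Perm α) := {f | ∃ a b, a ≠ x ∧ b ≠ x ∧ a ≠ b ∧ f = swap a b}
  have hσS : σ ∈ closure S := by
    refine (mem_closure_isSwap ?_).mpr ⟨Set.toFinite _, fun y ↦ ?_⟩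
    · rintro f ⟨a, b, -, -, hab, rfl⟩
      exact ⟨a, b, hab, rfl⟩
    by_cases hy : σ y = y
    · rw [hy]
      exact mem_orbit_self y
    have hyx : y ≠ x := by rintro rfl; exact hy hσ
    have hσyx : σ y ≠ x := fun e ↦ hyx (σ.injective (e.trans hσ.symm))
    exact ⟨⟨swap y (σ y), subset_closure ⟨y, σ y, hyx, hσyx, Ne.symm hy, rfl⟩⟩,
      swap_apply_left y (σ y)⟩
  refine (closure_le H).mpr ?_ hσS
  rintro f ⟨a, b, ha, hb, -, rfl⟩
  exact hswap a b ha hb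

end Equiv.Perm

def synthematicTotal : Finset (Finset (Finset (Fin 6))) :=
  {{{0, 1}, {2, 4}, {3, 5}}, {{0, 2}, {1, 3}, {4, 5}}, {{0, 3}, {1, 4}, {2, 5}},
    {{0, 4}, {1, 5}, {2, 3}}, {{0, 5}, {1, 2}, {3, 4}}}

abbrev totalStabilizer : Subgroup (Perm (Fin 6)) :=
  stabilizer (Perm (Fin 6)) synthematicTotal

-- The permutations of `{3, 4, 5}`, listed in the order that yields the prescribed values of `ψ`.
def cosetRep : Fin 6 → Perm (Fin 6) :=
  ![swap 4 5, swap 3 4 * swap 3 5, swap 3 4, 1, swap 3 5 * swap 3 4, swap 3 5]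

theorem closure_finRotate_swap :
    closure {finRotate 6, swap 0 1} = (⊤ : Subgroup (Perm (Fin 6))) :=
  Perm.closure_cycle_adjacent_swap isCycle_finRotate support_finRotate 0

theorem bijective_mk_cosetRep :
    Function.Bijective fun i ↦ (cosetRep i : Perm (Fin 6) ⧸ totalStabilizer) := by
  refine ⟨fun i j hij ↦ ?_, surjective_mk_comp_of_closure_eq_top closure_finRotate_swap ?_ 3⟩
  · have hrep : ∀ i j, (cosetRep i)⁻¹ * cosetRep j ∈ totalStabilizer → i = j := by decide
    exact hrep i j (QuotientGroup.eq.mp hij)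
  · rintro t (rfl | rfl) <;> decide

noncomputable def outerAutHom : Perm (Fin 6) →* Perm (Fin 6) :=
  transversalPerm bijective_mk_cosetRep

theorem outerAutHom_eq_iff {g σ : Perm (Fin 6)} :
    outerAutHom g = σ ↔ ∀ i, (cosetRep (σ i))⁻¹ * (g * cosetRep i) ∈ totalStabilizer :=
  transversalPerm_eq_iff bijective_mk_cosetRep

theorem surjective_outerAutHom : Function.Surjective outerAutHom := by
  rw [← MonoidHom.range_eq_top, eq_top_iff, ← closure_finRotate_swap, closure_le]
  rintro _ (rfl | rfl)
  · exact ⟨List.formPerm [0, 4, 5] * swap 1 3, outerAutHom_eq_iff.mpr (by decide)⟩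
  · exact ⟨swap 0 4 * swap 1 2 * swap 3 5, outerAutHom_eq_iff.mpr (by decide)⟩

noncomputable def outerAut : Perm (Fin 6) ≃* Perm (Fin 6) :=
  MulEquiv.ofBijective outerAutHom
    ⟨Finite.injective_iff_surjective.mpr surjective_outerAutHom, surjective_outerAutHom⟩

theorem outerAut_eq_iff {g σ : Perm (Fin 6)} :
    outerAut g = σ ↔ ∀ i, (cosetRep (σ i))⁻¹ * (g * cosetRep i) ∈ totalStabilizer :=
  outerAutHom_eq_iff

theorem outerAut_formPerm_0123 :
    outerAut (List.formPerm [0, 1, 2, 3]) = List.formPerm [1, 5, 2, 4] :=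
  outerAut_eq_iff.mpr (by decide)

theorem outerAut_formPerm_2345 :
    outerAut (List.formPerm [2, 3, 4, 5]) = List.formPerm [0, 1, 4, 2] :=
  outerAut_eq_iff.mpr (by decide)

theorem swap_zero_mem_closure (a : Fin 6) (ha : a ≠ 3) :
    swap 0 a ∈ closure {List.formPerm [1, 5, 2, 4], List.formPerm [0, 1, 4, 2]} := by
  set A : Perm (Fin 6) := List.formPerm [1, 5, 2, 4]
  set B : Perm (Fin 6) := List.formPerm [0, 1, 4, 2]
  have hA : A ∈ closure {A, B} := subset_closure (by simp)
  have hB : B ∈ closure {A, B} := subset_closure (by simp)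
  obtain rfl | rfl | rfl | rfl | rfl : a = 0 ∨ a = 1 ∨ a = 2 ∨ a = 4 ∨ a = 5 := by omega
  · rw [swap_self]
    exact one_mem _
  · rw [show swap (0 : Fin 6) 1 = B⁻¹ * A * B⁻¹ * A * A by decide]
    exact mul_mem (mul_mem (mul_mem (mul_mem (inv_mem hB) hA) (inv_mem hB)) hA) hA
  · rw [show swap (0 : Fin 6) 2 = B * A⁻¹ * B * A * A by decide]
    exact mul_mem (mul_mem (mul_mem (mul_mem hB (inv_mem hA)) hB) hA) hA
  · rw [show swap (0 : Fin 6) 4 = A * B * A⁻¹ * B * A by decide]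
    exact mul_mem (mul_mem (mul_mem (mul_mem hA hB) (inv_mem hA)) hB) hA
  · rw [show swap (0 : Fin 6) 5 = A * B⁻¹ * A * B⁻¹ * A by decide]
    exact mul_mem (mul_mem (mul_mem (mul_mem hA (inv_mem hB)) hA) (inv_mem hB)) hA

theorem closure_formPerm_eq_stabilizer :
    closure {List.formPerm [1, 5, 2, 4], List.formPerm [0, 1, 4, 2]} =
      stabilizer (Perm (Fin 6)) (3 : Fin 6) := by
  refine le_antisymm ((closure_le _).mpr ?_)
    (Perm.stabilizer_le_of_forall_swap_mem swap_zero_mem_closure)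
  rintro _ (rfl | rfl) <;> exact mem_stabilizer_iff.mpr (by decide)

theorem mem_closure_iff_outerAut_apply_three (π : Perm (Fin 6)) :
    π ∈ closure {List.formPerm [0, 1, 2, 3], List.formPerm [2, 3, 4, 5]} ↔ outerAut π 3 = 3 := by
  rw [← mem_map_iff_mem (f := outerAut.toMonoidHom) outerAut.injective, MonoidHom.map_closure,
    Set.image_pair, MulEquiv.coe_toMonoidHom, outerAut_formPerm_0123, outerAut_formPerm_2345,
    closure_formPerm_eq_stabilizer]
  rfl

/-- There is a group automorphism `ψ` of the symmetric group on `{1,…,6}`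
(modeled as `Fin 6`, 0-indexed) with the prescribed values on the transpositions
`(1 2), (1 3), (1 4), (1 5), (1 6)` such that a permutation `π` belongs to the subgroup
generated by `α = (1 2 3 4)` and `β = (3 4 5 6)` if and only if `ψ(π)` fixes the point `4`
(0-indexed: the point `3`). -/
theorem outer_automorphism_characterizes_four_four_puzzle :
    ∃ ψ : Equiv.Perm (Fin 6) ≃* Equiv.Perm (Fin 6),
      ψ (Equiv.swap 0 1) = Equiv.swap 0 4 * Equiv.swap 1 2 * Equiv.swap 3 5 ∧
      ψ (Equiv.swap 0 2) = Equiv.swap 0 3 * Equiv.swap 1 5 * Equiv.swap 2 4 ∧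
      ψ (Equiv.swap 0 3) = Equiv.swap 0 2 * Equiv.swap 1 3 * Equiv.swap 4 5 ∧
      ψ (Equiv.swap 0 4) = Equiv.swap 0 1 * Equiv.swap 2 5 * Equiv.swap 3 4 ∧
      ψ (Equiv.swap 0 5) = Equiv.swap 0 5 * Equiv.swap 1 4 * Equiv.swap 2 3 ∧
      ∀ π : Equiv.Perm (Fin 6),
        (π ∈ Subgroup.closure
          ({List.formPerm [(0 : Fin 6), 1, 2, 3],
            List.formPerm [(2 : Fin 6), 3, 4, 5]} : Set (Equiv.Perm (Fin 6)))) ↔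
        ψ π 3 = 3 :=
  ⟨outerAut, outerAut_eq_iff.mpr (by decide), outerAut_eq_iff.mpr (by decide),
    outerAut_eq_iff.mpr (by decide), outerAut_eq_iff.mpr (by decide),
    outerAut_eq_iff.mpr (by decide), mem_closure_iff_outerAut_apply_three⟩
end

section
/- Let V = {1,…,n} with n ≥ 3, let m ≥ 3, and let w : {1,…,m} → V be a surjective map such that for every i with 1 < i < m the three values w(i−1), w(i), w(i+1) are pairwise distinct. Let 𝒞 = {(w(i−1) w(i) w(i+1)) : 1 < i < m} be the corresponding set of 3-cycles. Then every 3-cycle on V can be written as a product of at most 3n elements of 𝒞 ∪ 𝒞⁻¹ (i.e., elements of 𝒞 and their inverses). -/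
section Wcyc

variable {α : Type*} [DecidableEq α]

/-- The 3-cycle sending `a ↦ b ↦ c ↦ a`. -/
def wcyc (a b c : α) : Equiv.Perm α := List.formPerm [a, b, c]

lemma wcyc_eq_swaps (a b c : α) : wcyc a b c = Equiv.swap a b * Equiv.swap b c := by
  simp [wcyc, List.formPerm_cons_cons, List.formPerm_singleton, mul_one]

lemma wcyc_fst {a b c : α} (hab : a ≠ b) (hac : a ≠ c) : wcyc a b c a = b := by
  rw [wcyc_eq_swaps, Equiv.Perm.mul_apply, Equiv.swap_apply_of_ne_of_ne hab hac,
    Equiv.swap_apply_left]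

lemma wcyc_snd {a b c : α} (hac : a ≠ c) (hbc : b ≠ c) : wcyc a b c b = c := by
  rw [wcyc_eq_swaps, Equiv.Perm.mul_apply, Equiv.swap_apply_left,
    Equiv.swap_apply_of_ne_of_ne (Ne.symm hac) (Ne.symm hbc)]

lemma wcyc_thd {a b c : α} : wcyc a b c c = a := by
  rw [wcyc_eq_swaps, Equiv.Perm.mul_apply, Equiv.swap_apply_right, Equiv.swap_apply_right]

lemma wcyc_other {a b c z : α} (h1 : z ≠ a) (h2 : z ≠ b) (h3 : z ≠ c) :
    wcyc a b c z = z := by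
  rw [wcyc_eq_swaps, Equiv.Perm.mul_apply, Equiv.swap_apply_of_ne_of_ne h2 h3,
    Equiv.swap_apply_of_ne_of_ne h1 h2]

lemma wcyc_conj (g : Equiv.Perm α) (a b c : α) :
    g * wcyc a b c * g⁻¹ = wcyc (g a) (g b) (g c) := by
  rw [wcyc_eq_swaps, wcyc_eq_swaps, Equiv.swap_apply_apply, Equiv.swap_apply_apply]
  group

lemma wcyc_rot {a b c : α} (hab : a ≠ b) (hac : a ≠ c) (hbc : b ≠ c) :
    wcyc a b c = wcyc b c a := by
  apply Equiv.ext; intro z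
  by_cases h1 : z = a
  · rw [h1, wcyc_fst hab hac, wcyc_thd]
  · by_cases h2 : z = b
    · rw [h2, wcyc_snd hac hbc, wcyc_fst hbc (Ne.symm hab)]
    · by_cases h3 : z = c
      · rw [h3, wcyc_thd, wcyc_snd (Ne.symm hab) (Ne.symm hac)]
      · rw [wcyc_other h1 h2 h3, wcyc_other h2 h3 h1]

lemma wcyc_inv {a b c : α} (hab : a ≠ b) (hac : a ≠ c) (hbc : b ≠ c) :
    (wcyc a b c)⁻¹ = wcyc c b a := by
  rw [inv_eq_iff_mul_eq_one]
  apply Equiv.ext; intro z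
  rw [Equiv.Perm.mul_apply, Equiv.Perm.one_apply]
  by_cases h1 : z = a
  · rw [h1, wcyc_thd, wcyc_thd]
  · by_cases h2 : z = b
    · rw [h2, wcyc_snd (Ne.symm hac) (Ne.symm hab), wcyc_fst hab hac]
    · by_cases h3 : z = c
      · rw [h3, wcyc_fst (Ne.symm hbc) (Ne.symm hac), wcyc_snd hac hbc]
      · rw [wcyc_other h3 h2 h1, wcyc_other h1 h2 h3]

lemma isThreeCycle_exists_wcyc {α : Type*} [Fintype α] [DecidableEq α] {π : Equiv.Perm α}
    (hπ : π.IsThreeCycle) : ∃ a b c : α, a ≠ b ∧ a ≠ c ∧ b ≠ c ∧ π = wcyc a b c := by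
  obtain ⟨a, ha, -⟩ := hπ.isCycle
  have h3 : π ^ 3 = 1 := by
    rw [← hπ.orderOf]; exact pow_orderOf_eq_one π
  have h3a : π (π (π a)) = a := by
    calc π (π (π a)) = (π ^ 3) a := by
          simp [pow_succ, Equiv.Perm.mul_apply]
      _ = a := by rw [h3]; rfl
  have hba : π a ≠ a := ha
  have hbsup : π a ∈ π.support := by
    rw [Equiv.Perm.apply_mem_support]; exact Equiv.Perm.mem_support.mpr ha
  have hcb : π (π a) ≠ π a := Equiv.Perm.mem_support.mp hbsup
  have hca : π (π a) ≠ a := by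
    intro hca
    apply hba
    have : π (π (π a)) = π a := by rw [hca]
    rw [h3a] at this
    exact this.symm
  refine ⟨a, π a, π (π a), Ne.symm hba, Ne.symm hca, Ne.symm hcb, ?_⟩
  have hsub : ({a, π a, π (π a)} : Finset α) ⊆ π.support := by
    intro t ht
    simp only [Finset.mem_insert, Finset.mem_singleton] at ht
    rcases ht with rfl | rfl | rfl
    · exact Equiv.Perm.mem_support.mpr ha
    · exact hbsup
    · rw [Equiv.Perm.apply_mem_support]; exact hbsup
  have hcard : ({a, π a, π (π a)} : Finset α).card = 3 := by
    rw [Finset.card_insert_of_notMem (by simp [Ne.symm hba, Ne.symm hca]),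
      Finset.card_insert_of_notMem (by simp [Ne.symm hcb]), Finset.card_singleton]
  have hsupp : π.support = {a, π a, π (π a)} :=
    (Finset.eq_of_subset_of_card_le hsub (le_of_eq (hπ.card_support.trans hcard.symm))).symm
  apply Equiv.ext; intro z
  by_cases h1 : z = a
  · rw [h1, wcyc_fst (Ne.symm hba) (Ne.symm hca)]
  · by_cases h2 : z = π a
    · rw [h2, wcyc_snd (Ne.symm hca) (Ne.symm hcb)]
    · by_cases h3 : z = π (π a)
      · rw [h3, wcyc_thd]; exact h3a
      · rw [wcyc_other h1 h2 h3]
        have hzs : z ∉ π.support := by rw [hsupp]; simp [h1, h2, h3]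
        exact Equiv.Perm.notMem_support.mp hzs

end Wcyc

section KeyLemma

/-- rank of a vertex w.r.t. a first-visit-time function -/
def rnk {n : ℕ} (f : Fin n → ℕ) (v : Fin n) : ℕ :=
  (Finset.univ.filter fun u => f u < f v).card

lemma rnk_lt {n : ℕ} (f : Fin n → ℕ) {u v : Fin n} (h : f u < f v) :
    rnk f u < rnk f v := by
  apply Finset.card_lt_card
  rw [Finset.ssubset_def]
  constructor
  · intro t ht
    simp only [Finset.mem_filter, Finset.mem_univ, true_and] at ht ⊢
    omega
  · intro hsub
    have hu : u ∈ Finset.univ.filter fun t => f t < f v := by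
      simp only [Finset.mem_filter, Finset.mem_univ, true_and]; exact h
    have hmem := hsub hu
    simp only [Finset.mem_filter, Finset.mem_univ, true_and] at hmem
    omega

lemma key_lemma {n : ℕ} (C : Set (Equiv.Perm (Fin n))) (f : Fin n → ℕ)
    (finj : ∀ u v : Fin n, f u = f v → u = v)
    (hgen : ∀ v : Fin n, 2 ≤ f v → ∃ q p : Fin n, q ≠ p ∧ p ≠ v ∧ q ≠ v ∧
      f q < f v ∧ f p < f v ∧ wcyc q p v ∈ C) :
    ∀ r : ℕ, ∀ a b c : Fin n, a ≠ b → a ≠ c → b ≠ c →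
      rnk f a ≤ r → rnk f b ≤ r → rnk f c ≤ r →
      ∃ l : List (Equiv.Perm (Fin n)), l.length ≤ 2 * r + 1 ∧
        (∀ g ∈ l, g ∈ C ∨ g⁻¹ ∈ C) ∧ l.prod = wcyc a b c := by
  intro r
  induction r with
  | zero =>
    intro a b c hab hac hbc ha hb hc
    exfalso
    have hne : f a ≠ f b := fun h => hab (finj _ _ h)
    rcases lt_or_gt_of_ne hne with h | h
    · have := rnk_lt f h; omega
    · have := rnk_lt f h; omega
  | succ r ih =>
    have step : ∀ x y v : Fin n, x ≠ y → x ≠ v → y ≠ v → f x < f v → f y < f v →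
        rnk f v ≤ r + 1 →
        ∃ l : List (Equiv.Perm (Fin n)), l.length ≤ 2 * (r + 1) + 1 ∧
          (∀ g ∈ l, g ∈ C ∨ g⁻¹ ∈ C) ∧ l.prod = wcyc x y v := by
      intro x y v hxy hxv hyv hfx hfy hrv
      have hfxy : f x ≠ f y := fun h => hxy (finj _ _ h)
      obtain ⟨q, p, hqp, hpv, hqv, hfq, hfp, hmem⟩ := hgen v (by omega)
      have hrank : ∀ u : Fin n, f u < f v → rnk f u ≤ r := by
        intro u hu
        have := rnk_lt f hu; omega
      have hinv2 : (wcyc v p q)⁻¹ = wcyc q p v :=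
        wcyc_inv (Ne.symm hpv) (Ne.symm hqv) (Ne.symm hqp)
      by_cases hqx : q = x
      · subst hqx
        by_cases hpy : p = y
        · subst hpy
          refine ⟨[wcyc q p v], by simp, ?_, by rw [List.prod_singleton]⟩
          intro g hg
          simp only [List.mem_singleton] at hg
          subst hg
          exact Or.inl hmem
        · -- C1 : target is wcyc q y v, conjugate by wcyc v p q
          have hyp : y ≠ p := fun e => hpy e.symm
          have hyq : y ≠ q := Ne.symm hxy
          obtain ⟨l', hl1, hl2, hl3⟩ := ih p y q (Ne.symm hyp) (Ne.symm hqp) hyq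
            (hrank p hfp) (hrank y hfy) (hrank q hfq)
          have hc : wcyc v p q * wcyc p y q * (wcyc v p q)⁻¹ = wcyc q y v := by
            rw [wcyc_conj, wcyc_snd (Ne.symm hqv) (Ne.symm hqp),
              wcyc_other hyv hyp hyq, wcyc_thd]
          refine ⟨wcyc v p q :: (l' ++ [wcyc q p v]), ?_, ?_, ?_⟩
          · simp only [List.length_cons, List.length_append, List.length_singleton, List.length_nil]
            omega
          · intro g hg
            simp only [List.mem_cons, List.mem_append, List.mem_singleton, List.not_mem_nil, or_false] at hg
            rcases hg with rfl | hg | rfl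
            · right; rw [hinv2]; exact hmem
            · exact hl2 g hg
            · exact Or.inl hmem
          · rw [List.prod_cons, List.prod_append, List.prod_singleton, hl3,
              ← mul_assoc, ← hinv2]
            exact hc
      · by_cases hqy : q = y
        · subst hqy
          by_cases hpx : p = x
          · subst hpx
            refine ⟨[wcyc v p q], by simp, ?_, ?_⟩
            · intro g hg
              simp only [List.mem_singleton] at hg
              subst hg
              right; rw [hinv2]; exact hmem
            · rw [List.prod_singleton]
              exact wcyc_rot (Ne.symm hpv) (Ne.symm hqv) (Ne.symm hqp)
          · -- C2 : target is wcyc x q v, conjugate by wcyc v p q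
            have hxp : x ≠ p := fun e => hpx e.symm
            have hxq : x ≠ q := hxy
            obtain ⟨l', hl1, hl2, hl3⟩ := ih x p q hxp hxq (Ne.symm hqp)
              (hrank x hfx) (hrank p hfp) (hrank q hfq)
            have hc : wcyc v p q * wcyc x p q * (wcyc v p q)⁻¹ = wcyc x q v := by
              rw [wcyc_conj, wcyc_other hxv hxp hxq,
                wcyc_snd (Ne.symm hqv) (Ne.symm hqp), wcyc_thd]
            refine ⟨wcyc v p q :: (l' ++ [wcyc q p v]), ?_, ?_, ?_⟩
            · simp only [List.length_cons, List.length_append, List.length_singleton, List.length_nil]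
              omega
            · intro g hg
              simp only [List.mem_cons, List.mem_append, List.mem_singleton, List.not_mem_nil, or_false] at hg
              rcases hg with rfl | hg | rfl
              · right; rw [hinv2]; exact hmem
              · exact hl2 g hg
              · exact Or.inl hmem
            · rw [List.prod_cons, List.prod_append, List.prod_singleton, hl3,
                ← mul_assoc, ← hinv2]
              exact hc
        · by_cases hpx : p = x
          · subst hpx
            -- B1 : target is wcyc p y v, conjugate by wcyc q p v
            have hyq : y ≠ q := fun e => hqy e.symm
            obtain ⟨l', hl1, hl2, hl3⟩ := ih q y p hqy hqp (Ne.symm hxy)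
              (hrank q hfq) (hrank y hfy) (hrank p hfp)
            have hc : wcyc q p v * wcyc q y p * (wcyc q p v)⁻¹ = wcyc p y v := by
              rw [wcyc_conj, wcyc_fst hqp hqv, wcyc_other hyq (Ne.symm hxy) hyv,
                wcyc_snd hqv hpv]
            refine ⟨wcyc q p v :: (l' ++ [(wcyc q p v)⁻¹]), ?_, ?_, ?_⟩
            · simp only [List.length_cons, List.length_append, List.length_singleton, List.length_nil]
              omega
            · intro g hg
              simp only [List.mem_cons, List.mem_append, List.mem_singleton, List.not_mem_nil, or_false] at hg
              rcases hg with rfl | hg | rfl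
              · exact Or.inl hmem
              · exact hl2 g hg
              · right; rw [inv_inv]; exact hmem
            · rw [List.prod_cons, List.prod_append, List.prod_singleton, hl3,
                ← mul_assoc]
              exact hc
          · by_cases hpy : p = y
            · subst hpy
              -- B2 : target is wcyc x p v, conjugate by wcyc q p v
              have hxq : x ≠ q := fun e => hqx e.symm
              obtain ⟨l', hl1, hl2, hl3⟩ := ih x q p hxq hxy hqp
                (hrank x hfx) (hrank q hfq) (hrank p hfp)
              have hc : wcyc q p v * wcyc x q p * (wcyc q p v)⁻¹ = wcyc x p v := by
                rw [wcyc_conj, wcyc_other hxq hxy hxv, wcyc_fst hqp hqv,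
                  wcyc_snd hqv hpv]
              refine ⟨wcyc q p v :: (l' ++ [(wcyc q p v)⁻¹]), ?_, ?_, ?_⟩
              · simp only [List.length_cons, List.length_append, List.length_singleton, List.length_nil]
                omega
              · intro g hg
                simp only [List.mem_cons, List.mem_append, List.mem_singleton, List.not_mem_nil, or_false] at hg
                rcases hg with rfl | hg | rfl
                · exact Or.inl hmem
                · exact hl2 g hg
                · right; rw [inv_inv]; exact hmem
              · rw [List.prod_cons, List.prod_append, List.prod_singleton, hl3,
                  ← mul_assoc]
                exact hc
            · -- A : target is wcyc x y v, conjugate by wcyc q p v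
              have hxq : x ≠ q := fun e => hqx e.symm
              have hxp : x ≠ p := fun e => hpx e.symm
              have hyq : y ≠ q := fun e => hqy e.symm
              have hyp : y ≠ p := fun e => hpy e.symm
              obtain ⟨l', hl1, hl2, hl3⟩ := ih x y p hxy hxp hyp
                (hrank x hfx) (hrank y hfy) (hrank p hfp)
              have hc : wcyc q p v * wcyc x y p * (wcyc q p v)⁻¹ = wcyc x y v := by
                rw [wcyc_conj, wcyc_other hxq hxp hxv, wcyc_other hyq hyp hyv,
                  wcyc_snd hqv hpv]
              refine ⟨wcyc q p v :: (l' ++ [(wcyc q p v)⁻¹]), ?_, ?_, ?_⟩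
              · simp only [List.length_cons, List.length_append, List.length_singleton, List.length_nil]
                omega
              · intro g hg
                simp only [List.mem_cons, List.mem_append, List.mem_singleton, List.not_mem_nil, or_false] at hg
                rcases hg with rfl | hg | rfl
                · exact Or.inl hmem
                · exact hl2 g hg
                · right; rw [inv_inv]; exact hmem
              · rw [List.prod_cons, List.prod_append, List.prod_singleton, hl3,
                  ← mul_assoc]
                exact hc
    intro a b c hab hac hbc ha hb hc
    have hfab : f a ≠ f b := fun h => hab (finj _ _ h)
    have hfac : f a ≠ f c := fun h => hac (finj _ _ h)
    have hfbc : f b ≠ f c := fun h => hbc (finj _ _ h)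
    by_cases h1 : f a < f c ∧ f b < f c
    · exact step a b c hab hac hbc h1.1 h1.2 hc
    · by_cases h2 : f a < f b ∧ f c < f b
      · obtain ⟨l, hl1, hl2, hl3⟩ := step c a b (Ne.symm hac) (Ne.symm hbc) hab h2.2 h2.1 hb
        refine ⟨l, hl1, hl2, ?_⟩
        rw [hl3]
        exact wcyc_rot (Ne.symm hac) (Ne.symm hbc) hab
      · have h3 : f b < f a ∧ f c < f a := by omega
        obtain ⟨l, hl1, hl2, hl3⟩ := step b c a hbc (Ne.symm hab) (Ne.symm hac) h3.1 h3.2 ha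
        refine ⟨l, hl1, hl2, ?_⟩
        rw [hl3]
        exact (wcyc_rot hab hac hbc).symm

end KeyLemma

/-- The set of 3-cycles `(w(i-1) w(i) w(i+1))` arising from a walk `w` (0-indexed: triples
of consecutive positions `i, i+1, i+2` with `i + 2 < m`). -/
def walkThreeCycles (n m : ℕ) (w : Fin m → Fin n) : Set (Equiv.Perm (Fin n)) :=
  {π | ∃ i : ℕ, ∃ h : i + 2 < m,
    π = List.formPerm [w ⟨i, by omega⟩, w ⟨i + 1, by omega⟩, w ⟨i + 2, h⟩]}

/-- For `V = Fin n` with `n ≥ 3`, `m ≥ 3` and a surjective map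
`w : Fin m → Fin n` in which any three consecutive values are pairwise distinct, every
3-cycle on `V` is a product of at most `3 * n` elements of the set `𝒞` of 3-cycles
`(w(i-1) w(i) w(i+1))` and their inverses. -/
theorem walk_three_cycles_generate_three_cycles (n m : ℕ) (hn : 3 ≤ n) (hm : 3 ≤ m)
    (w : Fin m → Fin n) (hsurj : Function.Surjective w)
    (hdist : ∀ i : ℕ, ∀ h : i + 2 < m,
      w ⟨i, by omega⟩ ≠ w ⟨i + 1, by omega⟩ ∧
      w ⟨i + 1, by omega⟩ ≠ w ⟨i + 2, h⟩ ∧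
      w ⟨i, by omega⟩ ≠ w ⟨i + 2, h⟩) :
    ∀ π : Equiv.Perm (Fin n), π.IsThreeCycle →
      ∃ l : List (Equiv.Perm (Fin n)),
        l.length ≤ 3 * n ∧
        (∀ g ∈ l, g ∈ walkThreeCycles n m w ∨ g⁻¹ ∈ walkThreeCycles n m w) ∧
        l.prod = π := by
  classical
  have hex : ∀ v : Fin n, ∃ i : ℕ, ∃ h : i < m, w ⟨i, h⟩ = v := by
    intro v
    obtain ⟨j, hj⟩ := hsurj v
    exact ⟨j.1, j.2, by simpa using hj⟩
  obtain ⟨f, hfspec⟩ : ∃ f : Fin n → ℕ, ∀ v : Fin n,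
      (∃ h : f v < m, w ⟨f v, h⟩ = v) ∧ ∀ j, j < f v → ∀ hj : j < m, w ⟨j, hj⟩ ≠ v := by
    refine ⟨fun v => Nat.find (hex v), fun v => ⟨Nat.find_spec (hex v), fun j hj hjm hwj => ?_⟩⟩
    exact Nat.find_min (hex v) hj ⟨hjm, hwj⟩
  have hfm : ∀ v, f v < m := fun v => (hfspec v).1.choose
  have hfw : ∀ v, w ⟨f v, hfm v⟩ = v := fun v => (hfspec v).1.choose_spec
  have hfle : ∀ (j : ℕ) (hj : j < m), f (w ⟨j, hj⟩) ≤ j := by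
    intro j hj
    by_contra hlt
    push_neg at hlt
    exact (hfspec (w ⟨j, hj⟩)).2 j hlt hj rfl
  have finj : ∀ u v : Fin n, f u = f v → u = v := by
    intro u v h
    have h1 := hfw u
    have h2 := hfw v
    have he : (⟨f u, hfm u⟩ : Fin m) = ⟨f v, hfm v⟩ := Fin.mk_eq_mk.mpr h
    rw [← h1, ← h2, he]
  have hgen : ∀ v : Fin n, 2 ≤ f v → ∃ q p : Fin n, q ≠ p ∧ p ≠ v ∧ q ≠ v ∧
      f q < f v ∧ f p < f v ∧ wcyc q p v ∈ walkThreeCycles n m w := by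
    intro v hv2
    have hvm : f v < m := hfm v
    have hi : (f v - 2) + 2 < m := by omega
    have hi0 : (f v - 2) < m := by omega
    have hi1 : (f v - 2) + 1 < m := by omega
    have hwv : w ⟨(f v - 2) + 2, hi⟩ = v := by
      have he : (⟨(f v - 2) + 2, hi⟩ : Fin m) = ⟨f v, hvm⟩ := Fin.mk_eq_mk.mpr (by omega)
      rw [he]
      exact hfw v
    obtain ⟨d1, d2, d3⟩ := hdist (f v - 2) hi
    refine ⟨w ⟨f v - 2, hi0⟩, w ⟨(f v - 2) + 1, hi1⟩, d1, ?_, ?_, ?_, ?_, ?_⟩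
    · exact fun e => d2 (e.trans hwv.symm)
    · exact fun e => d3 (e.trans hwv.symm)
    · exact lt_of_le_of_lt (hfle _ hi0) (by omega)
    · exact lt_of_le_of_lt (hfle _ hi1) (by omega)
    · refine ⟨f v - 2, hi, ?_⟩
      exact (congrArg (fun t => List.formPerm
        [w ⟨f v - 2, hi0⟩, w ⟨f v - 2 + 1, hi1⟩, t]) hwv).symm
  have hrk : ∀ v : Fin n, rnk f v ≤ n - 1 := by
    intro v
    have hsub : (Finset.univ.filter fun u => f u < f v) ⊆ Finset.univ.erase v := by
      intro t ht
      simp only [Finset.mem_filter, Finset.mem_univ, true_and] at ht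
      refine Finset.mem_erase.mpr ⟨?_, Finset.mem_univ t⟩
      intro e
      subst e
      omega
    calc rnk f v ≤ (Finset.univ.erase v).card := Finset.card_le_card hsub
      _ = n - 1 := by
          rw [Finset.card_erase_of_mem (Finset.mem_univ v), Finset.card_univ, Fintype.card_fin]
  intro π hπ
  obtain ⟨a, b, c, hab, hac, hbc, rfl⟩ := isThreeCycle_exists_wcyc hπ
  obtain ⟨l, hl1, hl2, hl3⟩ := key_lemma (walkThreeCycles n m w) f finj hgen (n - 1)
    a b c hab hac hbc (hrk a) (hrk b) (hrk c)
  exact ⟨l, by omega, hl2, hl3⟩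
end

section
/- In the 2-colored token shift instance constructed from a 3-dimensional matching instance (X, Y, Z, T) with |X| = |Y| = |Z| = m, |T| = n, and m ≤ n: if there exists a permutation π of the vertex set V that is a product of at most 3n elements of 𝒞 ∪ 𝒞⁻¹ and satisfies f_t = f_0 ∘ π, then T contains a matching (a subset M ⊆ T with |M| = m such that every element of X ∪ Y ∪ Z occurs in some triple of M). -/
/-- The vertex set of the 2-colored token shift instance built from a 3DM instance:
the disjoint union of `X`, `Y`, `Z` (each a copy of `Fin m`), the two extra vertices
`u` and `w` (modeled by `Bool`: `true = u`, `false = w`), the triplet vertices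
`t_{i,j}` (`Fin n × Fin 3`), and the path vertices `v_1, …, v_{3n-3m}`. -/
abbrev Vtx (m n : ℕ) : Type :=
  Fin m ⊕ Fin m ⊕ Fin m ⊕ Bool ⊕ (Fin n × Fin 3) ⊕ Fin (3 * n - 3 * m)

namespace Vtx

variable {m n : ℕ}

def VX (a : Fin m) : Vtx m n := Sum.inl a
def VY (a : Fin m) : Vtx m n := Sum.inr (Sum.inl a)
def VZ (a : Fin m) : Vtx m n := Sum.inr (Sum.inr (Sum.inl a))
def Vu : Vtx m n := Sum.inr (Sum.inr (Sum.inr (Sum.inl true)))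
def Vw : Vtx m n := Sum.inr (Sum.inr (Sum.inr (Sum.inl false)))
def VT (i : Fin n) (j : Fin 3) : Vtx m n :=
  Sum.inr (Sum.inr (Sum.inr (Sum.inr (Sum.inl (i, j)))))
def VV (i : Fin (3 * n - 3 * m)) : Vtx m n :=
  Sum.inr (Sum.inr (Sum.inr (Sum.inr (Sum.inr i))))

set_option synthInstance.maxSize 1024 in
/-- The cycle set `𝒞`: for every triple `t_i = (x, y, z)`, the three blue 5-cycles
`(u t_{i,1} t_{i,2} t_{i,3} x)`, `(u t_{i,1} t_{i,2} t_{i,3} y)`,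
`(u t_{i,1} t_{i,2} t_{i,3} z)`, and the red cycle
`(t_{i,3} t_{i,2} t_{i,1} v_1 v_2 … v_{3n-3m} w)`. -/
def cycleSet (T : Fin n → Fin m × Fin m × Fin m) : Set (Equiv.Perm (Vtx m n)) :=
  {π | ∃ i : Fin n,
    π = List.formPerm [Vu, VT i 0, VT i 1, VT i 2, VX (T i).1] ∨
    π = List.formPerm [Vu, VT i 0, VT i 1, VT i 2, VY (T i).2.1] ∨
    π = List.formPerm [Vu, VT i 0, VT i 1, VT i 2, VZ (T i).2.2] ∨
    π = List.formPerm
          ([VT i 2, VT i 1, VT i 0] ++ (List.finRange (3 * n - 3 * m)).map VV ++ [Vw])}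

/-- The initial token placement: black (`true`) exactly on the triplet vertices. -/
def f0 : Vtx m n → Bool := fun v =>
  match v with
  | Sum.inr (Sum.inr (Sum.inr (Sum.inr (Sum.inl _)))) => true
  | _ => false

/-- The final token placement: black (`true`) exactly on `X ∪ Y ∪ Z ∪ {v_1,…,v_{3n-3m}}`. -/
def ft : Vtx m n → Bool := fun v =>
  match v with
  | Sum.inl _ => true
  | Sum.inr (Sum.inl _) => true
  | Sum.inr (Sum.inr (Sum.inl _)) => true
  | Sum.inr (Sum.inr (Sum.inr (Sum.inr (Sum.inr _)))) => true
  | _ => false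

end Vtx

/-- The 3DM instance `T` (a set of `n` triples over `X × Y × Z`, each a copy of `Fin m`)
contains a matching: `m` of the triples cover every element of `X`, `Y` and `Z`. -/
def HasMatching (m n : ℕ) (T : Fin n → Fin m × Fin m × Fin m) : Prop :=
  ∃ S : Finset (Fin n), S.card = m ∧
    (∀ a : Fin m, ∃ i ∈ S, (T i).1 = a) ∧
    (∀ a : Fin m, ∃ i ∈ S, (T i).2.1 = a) ∧
    (∀ a : Fin m, ∃ i ∈ S, (T i).2.2 = a)

/-!
Two potentials bound the length of a shifting sequence from `f0` to `ft`. The number of black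
tokens on `t_{i,1}, t_{i,2}, t_{i,3}` drops from 3 to 0, by at most one per shift along a cycle
of `t_i`; the number of white tokens on the path `v_1, …, v_{3n-3m}` drops from `3n - 3m` to 0, by
at most one per shift along a red cycle; and each vertex of `X ∪ Y ∪ Z` must be moved by a blue
cycle through it, which takes `m` blue shifts per coordinate. So a sequence of at most `3n`
shifts touches every triple exactly three times, makes `3n - 3m` red and `3m` blue shifts, and
every shift lowers its potentials by exactly one.

Such tight shifts keep `w` white, which rules out shifting by a red cycle itself rather than its
inverse; shifting by a blue cycle itself would blacken `u` for good, although `u` is white in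
`ft`. An inverse blue shift of `t_i` needs `t_{i,3}` black and whitens `t_{i,1}`, an inverse red
shift needs `t_{i,1}` black and whitens `t_{i,3}`; so every triple is shifted along cycles of a
single colour, and the `3m` blue shifts fall on exactly `m` triples, which form a matching.
-/

namespace List

variable {α β : Type*}

theorem sum_countP_and_eq_countP [Fintype β] [DecidableEq β] (l : List α) (p : α → Prop)
    [DecidablePred p] (key : α → β) :
    ∑ b, l.countP (fun a => p a ∧ key a = b) = l.countP p := by
  induction l with
  | nil => simp
  | cons a l ih =>
    rw [countP_cons, ← ih]
    simp only [countP_cons, Finset.sum_add_distrib]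
    by_cases ha : p a <;> simp [ha]

theorem card_le_length_of_forall_mem_map [Fintype β] [DecidableEq β] {l : List α}
    {g : α → β} (h : ∀ b, b ∈ l.map g) : Fintype.card β ≤ l.length :=
  calc Fintype.card β = (Finset.univ : Finset β).card := rfl
    _ ≤ (l.map g).toFinset.card := Finset.card_le_card fun b _ => mem_toFinset.2 (h b)
    _ ≤ (l.map g).length := toFinset_card_le _
    _ = l.length := length_map _

theorem prefix_induction (P : List α → Prop) {l : List α} (nil : P [])
    (step : ∀ l₁ a l₂, l = l₁ ++ a :: l₂ → P l₁ → P (l₁ ++ [a]))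
    {l₁ l₂ : List α} (h : l = l₁ ++ l₂) : P l₁ := by
  induction l₁ using reverseRecOn generalizing l₂ with
  | nil => exact nil
  | append_singleton l₁ a ih =>
    rw [append_assoc, singleton_append] at h
    exact step l₁ a l₂ h (ih h)

section Telescoping

variable (step : α → β → α) (Φ : α → ℕ) (p : β → Bool)

theorem le_foldl_add_countP (h : ∀ a b, Φ a ≤ Φ (step a b) + if p b then 1 else 0)
    (l : List β) (a : α) : Φ a ≤ Φ (l.foldl step a) + l.countP p := by
  induction l generalizing a with
  | nil => simp
  | cons b l ih =>
    have := h a b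
    have := ih (step a b)
    rw [foldl_cons, countP_cons]
    omega

theorem eq_step_of_eq_foldl_add_countP
    (h : ∀ a b, Φ a ≤ Φ (step a b) + if p b then 1 else 0)
    {l : List β} {a : α} (hl : Φ a = Φ (l.foldl step a) + l.countP p)
    {l₁ l₂ : List β} {b : β} (hsplit : l = l₁ ++ b :: l₂) :
    Φ (l₁.foldl step a) = Φ (step (l₁.foldl step a) b) + if p b then 1 else 0 := by
  subst hsplit
  have h₁ := le_foldl_add_countP step Φ p h l₁ a
  have h₂ := h (l₁.foldl step a) b
  have h₃ := le_foldl_add_countP step Φ p h l₂ (step (l₁.foldl step a) b)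
  rw [foldl_append, foldl_cons, countP_append, countP_cons] at hl
  omega

end Telescoping

end List

namespace TokenShift

open Vtx

set_option synthInstance.maxSize 1024

variable {m n : ℕ}

def Vcoord : Fin 3 → Fin m → Vtx m n
  | 0 => VX
  | 1 => VY
  | 2 => VZ

def coord : Fin 3 → Fin m × Fin m × Fin m → Fin m
  | 0, t => t.1
  | 1, t => t.2.1
  | 2, t => t.2.2

/-- `pathVtx k` is `v_{k+1}` for `k < 3n - 3m` and `w` otherwise, so that the red cycle of `t_i`
visits `t_{i,3}`, `t_{i,2}`, `t_{i,1}`, `pathVtx 0`, …, `pathVtx (3n - 3m)`. -/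
def pathVtx (k : ℕ) : Vtx m n := if h : k < 3 * n - 3 * m then VV ⟨k, h⟩ else Vw

theorem pathVtx_of_le {k : ℕ} (hk : 3 * n - 3 * m ≤ k) : (pathVtx k : Vtx m n) = Vw := by
  simp [pathVtx, Nat.not_lt.2 hk]

def redChain (i : Fin n) : ℕ → Vtx m n
  | 0 => VT i 0
  | k + 1 => pathVtx k

theorem map_VV_append_Vw :
    (List.finRange (3 * n - 3 * m)).map VV ++ [Vw] =
      (List.range (3 * n - 3 * m + 1)).map (pathVtx (m := m) (n := n)) := by
  refine List.ext_getElem (by simp) fun k h₁ _ => ?_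
  simp only [List.length_append, List.length_map, List.length_finRange, List.length_cons,
    List.length_nil] at h₁
  rcases Nat.lt_or_ge k (3 * n - 3 * m) with hk | hk
  · simp [List.getElem_append_left, hk, pathVtx]
  · obtain rfl : k = 3 * n - 3 * m := by omega
    simp [pathVtx]

def blueCycle (i : Fin n) (x : Vtx m n) : Equiv.Perm (Vtx m n) :=
  List.formPerm [Vu, VT i 0, VT i 1, VT i 2, x]

def redList (i : Fin n) : List (Vtx m n) :=
  [VT i 2, VT i 1, VT i 0] ++ (List.finRange (3 * n - 3 * m)).map VV ++ [Vw]

def redCycle (i : Fin n) : Equiv.Perm (Vtx m n) := (redList i).formPerm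

theorem redList_eq (i : Fin n) :
    (redList i : List (Vtx m n)) =
      VT i 2 :: VT i 1 :: (List.range (3 * n - 3 * m + 2)).map (redChain i) := by
  rw [redList, List.append_assoc, map_VV_append_Vw, List.range_succ_eq_map (n := _ + 1),
    List.map_cons, List.map_map]
  rfl

theorem nodup_redList (i : Fin n) : (redList i : List (Vtx m n)).Nodup := by
  simp [redList, List.nodup_append, VT, VV, Vw,
    (List.nodup_finRange _).map (f := (VV : _ → Vtx m n)) fun a b h => by simpa [VV] using h]

section Blue

variable (i : Fin n) (j : Fin 3) (a : Fin m)

theorem blueCycle_apply_Vu : blueCycle i (Vcoord j a : Vtx m n) Vu = VT i 0 := by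
  fin_cases j <;> simp [blueCycle, List.formPerm_cons_cons, Equiv.swap_apply_def, Vu, VT,
    Vcoord, VX, VY, VZ]

theorem blueCycle_apply_VT0 : blueCycle i (Vcoord j a : Vtx m n) (VT i 0) = VT i 1 := by
  fin_cases j <;> simp [blueCycle, List.formPerm_cons_cons, Equiv.swap_apply_def, Vu, VT,
    Vcoord, VX, VY, VZ]

theorem blueCycle_apply_VT1 : blueCycle i (Vcoord j a : Vtx m n) (VT i 1) = VT i 2 := by
  fin_cases j <;> simp [blueCycle, List.formPerm_cons_cons, Equiv.swap_apply_def, Vu, VT,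
    Vcoord, VX, VY, VZ]

theorem blueCycle_apply_VT2 : blueCycle i (Vcoord j a : Vtx m n) (VT i 2) = Vcoord j a := by
  fin_cases j <;> simp [blueCycle, List.formPerm_cons_cons, Equiv.swap_apply_def, Vu, VT,
    Vcoord, VX, VY, VZ]

theorem blueCycle_inv_apply_VT0 : (blueCycle i (Vcoord j a : Vtx m n))⁻¹ (VT i 0) = Vu :=
  Equiv.Perm.inv_eq_iff_eq.2 (blueCycle_apply_Vu i j a).symm

theorem blueCycle_inv_apply_VT1 : (blueCycle i (Vcoord j a : Vtx m n))⁻¹ (VT i 1) = VT i 0 :=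
  Equiv.Perm.inv_eq_iff_eq.2 (blueCycle_apply_VT0 i j a).symm

theorem blueCycle_inv_apply_VT2 : (blueCycle i (Vcoord j a : Vtx m n))⁻¹ (VT i 2) = VT i 1 :=
  Equiv.Perm.inv_eq_iff_eq.2 (blueCycle_apply_VT1 i j a).symm

theorem blueCycle_apply_pathVtx (k : ℕ) :
    blueCycle i (Vcoord j a : Vtx m n) (pathVtx k) = pathVtx k := by
  refine List.formPerm_apply_of_notMem ?_
  unfold pathVtx
  split <;> fin_cases j <;> simp [Vu, VT, Vcoord, VX, VY, VZ, VV, Vw]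

end Blue

section Red

variable (i : Fin n)

theorem redCycle_apply_VT2 : redCycle i (VT i 2 : Vtx m n) = VT i 1 := by
  rw [redCycle, redList_eq]
  exact List.formPerm_apply_head _ _ _ (redList_eq i ▸ nodup_redList i)

theorem redCycle_apply_VT1 : redCycle i (VT i 1 : Vtx m n) = VT i 0 := by
  have h := List.formPerm_apply_lt_getElem _ (redList_eq i ▸ nodup_redList (m := m) i) 1
    (by simp)
  simpa only [redCycle, redList_eq, List.getElem_cons_succ, List.getElem_cons_zero,
    List.getElem_map, List.getElem_range, redChain] using h

theorem redCycle_apply_redChain {k : ℕ} (hk : k ≤ 3 * n - 3 * m) :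
    redCycle i (redChain i k : Vtx m n) = redChain i (k + 1) := by
  have h := List.formPerm_apply_lt_getElem _ (redList_eq i ▸ nodup_redList (m := m) i) (k + 2)
    (by simp; omega)
  simpa [redCycle, redList_eq] using h

theorem redCycle_apply_VT0 : redCycle i (VT i 0 : Vtx m n) = pathVtx 0 :=
  redCycle_apply_redChain i (Nat.zero_le _)

theorem redCycle_apply_Vw : redCycle i (Vw : Vtx m n) = VT i 2 :=
  List.formPerm_cons_concat_apply_last _ _ _

theorem redCycle_apply_Vu : redCycle i (Vu : Vtx m n) = Vu :=
  List.formPerm_apply_of_notMem (by simp [redList, Vu, VT, VV, Vw])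

theorem redCycle_inv_apply_VT0 : (redCycle i)⁻¹ (VT i 0 : Vtx m n) = VT i 1 :=
  Equiv.Perm.inv_eq_iff_eq.2 (redCycle_apply_VT1 i).symm

theorem redCycle_inv_apply_VT1 : (redCycle i)⁻¹ (VT i 1 : Vtx m n) = VT i 2 :=
  Equiv.Perm.inv_eq_iff_eq.2 (redCycle_apply_VT2 i).symm

theorem redCycle_inv_apply_VT2 : (redCycle i)⁻¹ (VT i 2 : Vtx m n) = Vw :=
  Equiv.Perm.inv_eq_iff_eq.2 (redCycle_apply_Vw i).symm

theorem redCycle_inv_apply_Vw :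
    (redCycle i)⁻¹ (Vw : Vtx m n) = redChain i (3 * n - 3 * m) :=
  Equiv.Perm.inv_eq_iff_eq.2
    ((redCycle_apply_redChain i le_rfl).trans (pathVtx_of_le le_rfl)).symm

theorem redCycle_inv_apply_redChain {k : ℕ} (hk : k ≤ 3 * n - 3 * m) :
    (redCycle i)⁻¹ (redChain i (k + 1) : Vtx m n) = redChain i k :=
  Equiv.Perm.inv_eq_iff_eq.2 (redCycle_apply_redChain i hk).symm

end Red

/-- A shift along the blue cycle of `t_triple` through its `j`-th coordinate (`kind = some j`) or
along its red cycle (`kind = none`), by the inverse cycle when `inv`. -/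
structure Move (n : ℕ) where
  triple : Fin n
  kind : Option (Fin 3)
  inv : Bool

namespace Move

variable (T : Fin n → Fin m × Fin m × Fin m)

def cycle (e : Move n) : Equiv.Perm (Vtx m n) :=
  match e.kind with
  | none => redCycle e.triple
  | some j => blueCycle e.triple (Vcoord j (coord j (T e.triple)))

def perm (e : Move n) : Equiv.Perm (Vtx m n) := if e.inv then (e.cycle T)⁻¹ else e.cycle T

/-- The vertex whose token leaves `t_{i,1}, t_{i,2}, t_{i,3}` (for `i = e.triple`) in the shift
`f ↦ f ∘ e.perm T`. -/
def exit (e : Move n) : Vtx m n :=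
  match e.kind, e.inv with
  | some _, false => VT e.triple 0
  | some _, true => VT e.triple 2
  | none, false => VT e.triple 2
  | none, true => VT e.triple 0

/-- The vertex whose token enters `t_{i,1}, t_{i,2}, t_{i,3}` in the same shift. -/
def entry (e : Move n) : Vtx m n :=
  match e.kind, e.inv with
  | some j, false => Vcoord j (coord j (T e.triple))
  | some _, true => Vu
  | none, false => pathVtx 0
  | none, true => Vw

variable {T}

theorem exists_perm_eq {γ : Equiv.Perm (Vtx m n)}
    (h : γ ∈ cycleSet T ∨ γ⁻¹ ∈ cycleSet T) : ∃ e : Move n, e.perm T = γ := by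
  have hcycle : ∀ π ∈ cycleSet T, ∃ i k, (⟨i, k, false⟩ : Move n).cycle T = π := by
    rintro π ⟨i, rfl | rfl | rfl | rfl⟩
    exacts [⟨i, some 0, rfl⟩, ⟨i, some 1, rfl⟩, ⟨i, some 2, rfl⟩, ⟨i, none, rfl⟩]
  rcases h with h | h
  · obtain ⟨i, k, hk⟩ := hcycle γ h
    exact ⟨⟨i, k, false⟩, hk⟩
  · obtain ⟨i, k, hk⟩ := hcycle γ⁻¹ h
    exact ⟨⟨i, k, true⟩, show (cycle T ⟨i, k, false⟩)⁻¹ = γ by rw [hk, inv_inv]⟩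

theorem perm_apply_eq_self {e : Move n} {v : Vtx m n} (h : e.cycle T v = v) :
    e.perm T v = v := by
  unfold perm
  split
  · exact Equiv.Perm.inv_eq_iff_eq.2 h.symm
  · exact h

theorem perm_apply_VT_of_ne (e : Move n) {i : Fin n} (hi : i ≠ e.triple) (k : Fin 3) :
    e.perm T (VT i k) = VT i k := by
  obtain ⟨i', _ | j, _⟩ := e <;> refine perm_apply_eq_self (List.formPerm_apply_of_notMem ?_)
  · simp_all [redList, VT, VV, Vw]
  · fin_cases j <;> simp_all [VT, Vu, Vcoord, VX, VY, VZ]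

theorem perm_apply_Vcoord {e : Move n} {j : Fin 3} {a : Fin m}
    (h : ¬(e.kind = some j ∧ coord j (T e.triple) = a)) :
    e.perm T (Vcoord j a) = Vcoord j a := by
  obtain ⟨i', _ | j', _⟩ := e <;> refine perm_apply_eq_self (List.formPerm_apply_of_notMem ?_)
  · fin_cases j <;> simp [redList, VT, VV, Vw, Vcoord, VX, VY, VZ]
  · simp only [not_and, Option.some.injEq] at h
    fin_cases j <;> fin_cases j' <;> simp [VT, Vu, Vcoord, VX, VY, VZ] <;>
      exact fun ha => h rfl ha.symm

end Move

theorem exists_map_perm_eq {l : List (Equiv.Perm (Vtx m n))}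
    (h : ∀ γ ∈ l, γ ∈ cycleSet T ∨ γ⁻¹ ∈ cycleSet T) :
    ∃ d : List (Move n), d.map (Move.perm T) = l := by
  induction l with
  | nil => exact ⟨[], rfl⟩
  | cons γ l ih =>
    obtain ⟨e, he⟩ := Move.exists_perm_eq (h γ List.mem_cons_self)
    obtain ⟨d, hd⟩ := ih fun γ' hγ' => h γ' (List.mem_cons_of_mem _ hγ')
    exact ⟨e :: d, by rw [List.map_cons, he, hd]⟩

variable (T : Fin n → Fin m × Fin m × Fin m)

def shiftBy (f : Vtx m n → Bool) (d : List (Move n)) : Vtx m n → Bool :=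
  d.foldl (fun f e => f ∘ e.perm T) f

variable {T}

theorem shiftBy_eq_comp_prod (f : Vtx m n → Bool) (d : List (Move n)) :
    shiftBy T f d = f ∘ ⇑(d.map (Move.perm T)).prod := by
  induction d generalizing f with
  | nil => rfl
  | cons e d ih =>
    rw [shiftBy, List.foldl_cons, ← shiftBy, ih, List.map_cons, List.prod_cons,
      Equiv.Perm.coe_mul, Function.comp_assoc]

theorem shiftBy_append_singleton (f : Vtx m n → Bool) (d : List (Move n)) (e : Move n) :
    shiftBy T f (d ++ [e]) = shiftBy T f d ∘ e.perm T := by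
  simp [shiftBy, List.foldl_append]

theorem exists_mem_perm_apply_ne {f : Vtx m n → Bool} {d : List (Move n)} {v : Vtx m n}
    (h : shiftBy T f d v ≠ f v) : ∃ e ∈ d, e.perm T v ≠ v := by
  by_contra! hfix
  have hprod : (d.map (Move.perm T)).prod ∈ MulAction.stabilizer (Equiv.Perm (Vtx m n)) v :=
    Subgroup.list_prod_mem _ (by simpa [MulAction.mem_stabilizer_iff, Equiv.Perm.smul_def])
  rw [MulAction.mem_stabilizer_iff, Equiv.Perm.smul_def] at hprod
  rw [shiftBy_eq_comp_prod, Function.comp_apply, hprod] at h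
  exact h rfl

def tripleBlack (f : Vtx m n → Bool) (i : Fin n) : ℕ :=
  (f (VT i 0)).toNat + (f (VT i 1)).toNat + (f (VT i 2)).toNat

def pathWhite (f : Vtx m n → Bool) : ℕ :=
  ∑ k ∈ Finset.range (3 * n - 3 * m), (!f (pathVtx k)).toNat

@[simp] theorem tripleBlack_f0 (i : Fin n) : tripleBlack (f0 : Vtx m n → Bool) i = 3 := rfl

@[simp] theorem tripleBlack_ft (i : Fin n) : tripleBlack (ft : Vtx m n → Bool) i = 0 := rfl

@[simp] theorem pathWhite_f0 : pathWhite (f0 : Vtx m n → Bool) = 3 * n - 3 * m := by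
  have h : ∀ k ∈ Finset.range (3 * n - 3 * m),
      (!(f0 : Vtx m n → Bool) (pathVtx k)).toNat = 1 := fun k hk => by
    simp [pathVtx, Finset.mem_range.1 hk, f0, VV]
  simp [pathWhite, Finset.sum_congr rfl h]

@[simp] theorem pathWhite_ft : pathWhite (ft : Vtx m n → Bool) = 0 :=
  Finset.sum_eq_zero fun k hk => by simp [pathVtx, Finset.mem_range.1 hk, ft, VV]

section Balance

variable (f : Vtx m n → Bool)

theorem tripleBlack_comp_perm (e : Move n) :
    tripleBlack (f ∘ e.perm T) e.triple + (f e.exit).toNat =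
      tripleBlack f e.triple + (f (e.entry T)).toNat := by
  obtain ⟨i, _ | j, _ | _⟩ := e <;>
    simp only [tripleBlack, Move.perm, Move.cycle, Move.exit, Move.entry, Function.comp_apply,
      Bool.false_eq_true, if_true, if_false, redCycle_apply_VT0, redCycle_apply_VT1,
      redCycle_apply_VT2,
      redCycle_inv_apply_VT0, redCycle_inv_apply_VT1, redCycle_inv_apply_VT2,
      blueCycle_apply_VT0, blueCycle_apply_VT1, blueCycle_apply_VT2, blueCycle_inv_apply_VT0,
      blueCycle_inv_apply_VT1, blueCycle_inv_apply_VT2] <;>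
    omega

theorem tripleBlack_comp_perm_of_ne {e : Move n} {i : Fin n} (hi : i ≠ e.triple) :
    tripleBlack (f ∘ e.perm T) i = tripleBlack f i := by
  simp [tripleBlack, Move.perm_apply_VT_of_ne e hi]

theorem pathWhite_comp_perm_of_kind_eq_some {e : Move n} {j : Fin 3}
    (he : e.kind = some j) :
    pathWhite (f ∘ e.perm T) = pathWhite f := by
  obtain ⟨i, _, b⟩ := e
  subst he
  have hfix : ∀ k, Move.perm T ⟨i, some j, b⟩ (pathVtx k) = pathVtx k := fun k =>
    Move.perm_apply_eq_self (blueCycle_apply_pathVtx i j _ k)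
  simp [pathWhite, hfix]

theorem pathWhite_comp_redCycle (i : Fin n) :
    pathWhite (f ∘ redCycle i) + (!f (pathVtx 0)).toNat = pathWhite f + (!f Vw).toNat := by
  have hshift : ∀ k ∈ Finset.range (3 * n - 3 * m),
      (!(f ∘ redCycle i) (pathVtx k)).toNat = (!f (pathVtx (k + 1))).toNat := fun k hk => by
    rw [Function.comp_apply, show (pathVtx k : Vtx m n) = redChain i (k + 1) from rfl,
      redCycle_apply_redChain i (by simp at hk; omega)]
    rfl
  have h₁ := Finset.sum_range_succ' (fun k => (!f (pathVtx k)).toNat) (3 * n - 3 * m)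
  have h₂ := Finset.sum_range_succ (fun k => (!f (pathVtx k)).toNat) (3 * n - 3 * m)
  rw [pathVtx_of_le le_rfl] at h₂
  rw [pathWhite, pathWhite, Finset.sum_congr rfl hshift]
  omega

theorem pathWhite_comp_redCycle_inv (i : Fin n) :
    pathWhite (f ∘ ⇑(redCycle i)⁻¹) + (!f (redChain i (3 * n - 3 * m))).toNat =
      pathWhite f + (!f (VT i 0)).toNat := by
  have hshift : ∀ k ∈ Finset.range (3 * n - 3 * m),
      (!(f ∘ ⇑(redCycle i)⁻¹) (pathVtx k)).toNat = (!f (redChain i k)).toNat :=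
    fun k hk => by
    rw [Function.comp_apply, show (pathVtx k : Vtx m n) = redChain i (k + 1) from rfl,
      redCycle_inv_apply_redChain i (by simp at hk; omega)]
  have h₁ := Finset.sum_range_succ' (fun k => (!f (redChain i k)).toNat) (3 * n - 3 * m)
  have h₂ := Finset.sum_range_succ (fun k => (!f (redChain i k)).toNat) (3 * n - 3 * m)
  rw [pathWhite, pathWhite, Finset.sum_congr rfl hshift]
  exact h₂.symm.trans h₁

end Balance

theorem tripleBlack_le_step (f : Vtx m n → Bool) (e : Move n) (i : Fin n) :
    tripleBlack f i ≤ tripleBlack (f ∘ e.perm T) i + if e.triple = i then 1 else 0 := by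
  by_cases hi : e.triple = i
  · subst hi
    have := tripleBlack_comp_perm (T := T) f e
    have := Bool.toNat_le (f e.exit)
    rw [if_pos rfl]
    omega
  · rw [tripleBlack_comp_perm_of_ne f (Ne.symm hi), if_neg hi, add_zero]

theorem pathWhite_le_step (f : Vtx m n → Bool) (e : Move n) :
    pathWhite f ≤ pathWhite (f ∘ e.perm T) + if e.kind = none then 1 else 0 := by
  obtain ⟨i, _ | j, _ | _⟩ := e
  · have := pathWhite_comp_redCycle f i
    have := Bool.toNat_le (!f (pathVtx 0))
    change pathWhite f ≤ pathWhite (f ∘ redCycle i) + 1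
    omega
  · have := pathWhite_comp_redCycle_inv f i
    have := Bool.toNat_le (!f (redChain i (3 * n - 3 * m)))
    change pathWhite f ≤ pathWhite (f ∘ ⇑(redCycle i)⁻¹) + 1
    omega
  all_goals simp [pathWhite_comp_perm_of_kind_eq_some (T := T) (e := ⟨i, some j, _⟩) f rfl]

variable (T) in
def TightStep (f : Vtx m n → Bool) (e : Move n) : Prop :=
  tripleBlack f e.triple = tripleBlack (f ∘ e.perm T) e.triple + 1 ∧
    pathWhite f = pathWhite (f ∘ e.perm T) + if e.kind = none then 1 else 0

namespace TightStep

variable {f : Vtx m n → Bool} {e : Move n}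

theorem apply_exit (h : TightStep T f e) : f e.exit = true := by
  have := tripleBlack_comp_perm (T := T) f e
  have := Bool.toNat_le (f e.exit)
  have := h.1
  exact Bool.toNat_eq_one.1 (by omega)

theorem apply_entry (h : TightStep T f e) : f (e.entry T) = false := by
  have := tripleBlack_comp_perm (T := T) f e
  have := Bool.toNat_le (f e.exit)
  have := h.1
  exact Bool.toNat_eq_zero.1 (by omega)

theorem apply_Vw_of_red_fwd {i : Fin n} (h : TightStep T f ⟨i, none, false⟩) :
    f Vw = true := by
  have h₁ := pathWhite_comp_redCycle f i
  have h₂ : pathWhite f = pathWhite (f ∘ redCycle i) + 1 := h.2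
  have := Bool.toNat_le (!f (pathVtx 0))
  have : (!f Vw).toNat = 0 := by omega
  simpa using this

theorem apply_redChain_of_red_inv {i : Fin n} (h : TightStep T f ⟨i, none, true⟩) :
    f (redChain i (3 * n - 3 * m)) = false := by
  have h₁ := pathWhite_comp_redCycle_inv f i
  have h₂ : pathWhite f = pathWhite (f ∘ ⇑(redCycle i)⁻¹) + 1 := h.2
  have := Bool.toNat_le (!f (redChain i (3 * n - 3 * m)))
  have : (!f (redChain i (3 * n - 3 * m))).toNat = 1 := by omega
  simpa using this

theorem comp_apply_Vw (h : TightStep T f e) (hw : f Vw = false) :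
    (f ∘ e.perm T) Vw = false := by
  obtain ⟨i, _ | j, _ | _⟩ := e
  · exact absurd h.apply_Vw_of_red_fwd (by simp [hw])
  · exact (congrArg f (redCycle_inv_apply_Vw i)).trans h.apply_redChain_of_red_inv
  all_goals
    rw [Function.comp_apply, ← pathVtx_of_le le_rfl,
      Move.perm_apply_eq_self (blueCycle_apply_pathVtx _ _ _ _), pathVtx_of_le le_rfl, hw]

theorem inv_of_kind_eq_none (h : TightStep T f e) (hw : f Vw = false) (hk : e.kind = none) :
    e.inv = true := by
  obtain ⟨i, k, _ | _⟩ := e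
  · subst hk
    exact absurd h.apply_Vw_of_red_fwd (by simp [hw])
  · rfl

theorem comp_apply_Vu (h : TightStep T f e)
    (hu : f Vu = true ∨ e.kind ≠ none ∧ e.inv = false) : (f ∘ e.perm T) Vu = true := by
  obtain ⟨i, _ | j, _ | _⟩ := e
  all_goals simp only [ne_eq, not_true_eq_false, reduceCtorEq, not_false_eq_true,
    Bool.true_eq_false, and_true, and_false, or_false] at hu
  · exact (congrArg f (Move.perm_apply_eq_self (redCycle_apply_Vu i))).trans hu
  · exact (congrArg f (Move.perm_apply_eq_self (redCycle_apply_Vu i))).trans hu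
  · exact (congrArg f (blueCycle_apply_Vu i j _)).trans h.apply_exit
  · exact absurd hu (by simp [show f Vu = false from h.apply_entry])

theorem apply_VT_of_blue_inv (h : TightStep T f e) (hk : e.kind ≠ none)
    (hinv : e.inv = true) :
    f (VT e.triple 2) = true ∧ (f ∘ e.perm T) (VT e.triple 0) = false := by
  obtain ⟨i, _ | j, _ | _⟩ := e <;>
    simp only [ne_eq, not_true_eq_false, Bool.false_eq_true] at hk hinv
  exact ⟨h.apply_exit, (congrArg f (blueCycle_inv_apply_VT0 i j _)).trans h.apply_entry⟩

theorem apply_VT_of_red_inv (h : TightStep T f e) (hk : e.kind = none)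
    (hinv : e.inv = true) :
    f (VT e.triple 0) = true ∧ (f ∘ e.perm T) (VT e.triple 2) = false := by
  obtain ⟨i, _ | j, _ | _⟩ := e <;> simp only [reduceCtorEq, Bool.false_eq_true] at hk hinv
  exact ⟨h.apply_exit, (congrArg f (redCycle_inv_apply_VT2 i)).trans h.apply_entry⟩

end TightStep

variable {d : List (Move n)}

theorem three_le_countP_triple (hend : shiftBy T f0 d = ft) (i : Fin n) :
    3 ≤ d.countP (·.triple = i) := by
  have h := List.le_foldl_add_countP (fun f e => f ∘ e.perm T) (tripleBlack · i) (·.triple = i)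
    (fun f e => by simpa using tripleBlack_le_step f e i) d f0
  change _ ≤ tripleBlack (shiftBy T f0 d) i + _ at h
  simpa [hend] using h

theorem le_countP_kind_eq_none (hend : shiftBy T f0 d = ft) :
    3 * n - 3 * m ≤ d.countP (·.kind = none) := by
  have h := List.le_foldl_add_countP (fun f e => f ∘ e.perm T) pathWhite (·.kind = none)
    (fun f e => by simpa using pathWhite_le_step f e) d f0
  change _ ≤ pathWhite (shiftBy T f0 d) + _ at h
  simpa [hend] using h

theorem exists_mem_kind_coord (hend : shiftBy T f0 d = ft) (j : Fin 3) (a : Fin m) :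
    ∃ e ∈ d, e.kind = some j ∧ coord j (T e.triple) = a := by
  have hne : shiftBy T f0 d (Vcoord j a) ≠ (f0 : Vtx m n → Bool) (Vcoord j a) := by
    rw [hend]
    fin_cases j <;> simp [Vcoord, VX, VY, VZ, f0, ft]
  obtain ⟨e, he, hmoved⟩ := exists_mem_perm_apply_ne hne
  exact ⟨e, he, by_contra fun h => hmoved (Move.perm_apply_Vcoord h)⟩

theorem le_countP_kind_eq_some (hend : shiftBy T f0 d = ft) (j : Fin 3) :
    m ≤ d.countP (·.kind = some j) := by
  rw [List.countP_eq_length_filter]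
  simpa using List.card_le_length_of_forall_mem_map
    (l := d.filter (·.kind = some j)) (g := fun e => coord j (T e.triple)) fun a => by
      obtain ⟨e, he, hk, ha⟩ := exists_mem_kind_coord hend j a
      exact List.mem_map.2 ⟨e, List.mem_filter.2 ⟨he, by simpa using hk⟩, ha⟩

theorem countP_eq_of_length_le (hend : shiftBy T f0 d = ft) (hlen : d.length ≤ 3 * n) :
    (∀ i, d.countP (·.triple = i) = 3) ∧ d.countP (·.kind = none) = 3 * n - 3 * m ∧
      d.countP (·.kind ≠ none) = 3 * m := by
  have htriple : ∑ i, d.countP (·.triple = i) = d.length := by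
    simpa using List.sum_countP_and_eq_countP d (fun _ => True) Move.triple
  have hkind : ∑ k, d.countP (·.kind = k) = d.length := by
    simpa using List.sum_countP_and_eq_countP d (fun _ => True) Move.kind
  have hsplit := List.length_eq_countP_add_countP (fun e : Move n => e.kind = none) (l := d)
  rw [Fintype.sum_option] at hkind
  have hblue : 3 * m ≤ ∑ j : Fin 3, d.countP (·.kind = some j) := by
    simpa using Finset.sum_le_sum fun j (_ : j ∈ Finset.univ) => le_countP_kind_eq_some hend j
  have hred := le_countP_kind_eq_none hend
  have h3 : ∀ i ∈ Finset.univ, 3 ≤ d.countP (·.triple = i) := fun i _ =>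
    three_le_countP_triple hend i
  have hsum : ∑ _i : Fin n, 3 = ∑ i, d.countP (·.triple = i) := by
    have := Finset.sum_le_sum h3
    simp only [Finset.sum_const, Finset.card_univ, Fintype.card_fin, smul_eq_mul] at this ⊢
    omega
  have hlen' : d.length = 3 * n := by simp at hsum; omega
  refine ⟨fun i => ((Finset.sum_eq_sum_iff_of_le h3).1 hsum i (Finset.mem_univ i)).symm,
    by omega, by simp at hsplit ⊢; omega⟩

def Unmixed (f : Vtx m n → Bool) (d : List (Move n)) : Prop :=
  ∀ i, (∀ e ∈ d, e.triple = i → e.kind ≠ none ∧ f (VT i 0) = false) ∨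
    (∀ e ∈ d, e.triple = i → e.kind = none ∧ f (VT i 2) = false)

theorem Unmixed.comp_perm {f : Vtx m n → Bool} {e : Move n}
    (h : Unmixed f d) (hstep : TightStep T f e) (hinv : e.inv = true) :
    Unmixed (f ∘ e.perm T) (d ++ [e]) := by
  intro i
  simp only [List.mem_append, List.mem_singleton]
  by_cases hi : e.triple = i
  · subst hi
    by_cases hk : e.kind = none
    · obtain ⟨h0, h2⟩ := hstep.apply_VT_of_red_inv hk hinv
      refine Or.inr fun e' he' hi' => ⟨?_, h2⟩
      rcases he' with he' | rfl
      · rcases h e.triple with h | h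
        exacts [absurd (h e' he' hi').2 (by simp [h0]), (h e' he' hi').1]
      · exact hk
    · obtain ⟨h2, h0⟩ := hstep.apply_VT_of_blue_inv hk hinv
      refine Or.inl fun e' he' hi' => ⟨?_, h0⟩
      rcases he' with he' | rfl
      · rcases h e.triple with h | h
        exacts [(h e' he' hi').1, absurd (h e' he' hi').2 (by simp [h2])]
      · exact hk
  · have hfix (k : Fin 3) : (f ∘ e.perm T) (VT i k) = f (VT i k) :=
      congrArg f (Move.perm_apply_VT_of_ne e (Ne.symm hi) k)
    rw [hfix, hfix]
    rcases h i with h | h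
    · refine Or.inl fun e' he' hi' => ?_
      rcases he' with he' | rfl
      exacts [h e' he' hi', absurd hi' hi]
    · refine Or.inr fun e' he' hi' => ?_
      rcases he' with he' | rfl
      exacts [h e' he' hi', absurd hi' hi]

variable (T) in
def AllTight (d : List (Move n)) : Prop :=
  ∀ d₁ e d₂, d = d₁ ++ e :: d₂ → TightStep T (shiftBy T f0 d₁) e

theorem allTight (hend : shiftBy T f0 d = ft) (htriple : ∀ i, d.countP (·.triple = i) = 3)
    (hred : d.countP (·.kind = none) = 3 * n - 3 * m) : AllTight T d := by
  intro d₁ e d₂ hsplit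
  constructor
  · have h := List.eq_step_of_eq_foldl_add_countP (fun f e => f ∘ e.perm T)
      (tripleBlack · e.triple) (·.triple = e.triple)
      (fun f e' => by simpa using tripleBlack_le_step f e' e.triple)
      (l := d) (a := f0) (by change _ = tripleBlack (shiftBy T f0 d) _ + _; simp [hend, htriple])
      hsplit
    simpa [shiftBy] using h
  · have h := List.eq_step_of_eq_foldl_add_countP (fun f e => f ∘ e.perm T) pathWhite
      (·.kind = none) (fun f e' => by simpa using pathWhite_le_step f e')
      (l := d) (a := f0) (by change _ = pathWhite (shiftBy T f0 d) + _; simp [hend, hred])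
      hsplit
    simpa [shiftBy] using h

namespace AllTight

theorem shiftBy_Vw (hd : AllTight T d) {d₁ d₂ : List (Move n)} (hsplit : d = d₁ ++ d₂) :
    shiftBy T f0 d₁ Vw = false := by
  refine List.prefix_induction (fun d₁ => shiftBy T f0 d₁ Vw = false) rfl ?_ hsplit
  intro d₁ e d₂ hsplit hw
  rw [shiftBy_append_singleton]
  exact (hd d₁ e d₂ hsplit).comp_apply_Vw hw

theorem shiftBy_Vu (hd : AllTight T d) {d₁ d₂ : List (Move n)} (hsplit : d = d₁ ++ d₂)
    (hfwd : ∃ e ∈ d₁, e.kind ≠ none ∧ e.inv = false) : shiftBy T f0 d₁ Vu = true := by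
  refine List.prefix_induction
    (fun d₁ => (∃ e ∈ d₁, e.kind ≠ none ∧ e.inv = false) →
      shiftBy T f0 d₁ Vu = true)
    (by simp) ?_ hsplit hfwd
  intro d₁ e d₂ hsplit hu hfwd
  rw [shiftBy_append_singleton]
  refine (hd d₁ e d₂ hsplit).comp_apply_Vu ?_
  simp only [List.mem_append, List.mem_singleton] at hfwd
  obtain ⟨e', he' | rfl, hfwd'⟩ := hfwd
  exacts [Or.inl (hu ⟨e', he', hfwd'⟩), Or.inr hfwd']

theorem inv_eq_true (hd : AllTight T d) (hend : shiftBy T f0 d = ft) {e : Move n}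
    (he : e ∈ d) : e.inv = true := by
  obtain ⟨d₁, d₂, hsplit⟩ := List.append_of_mem he
  by_cases hk : e.kind = none
  · exact (hd d₁ e d₂ hsplit).inv_of_kind_eq_none (hd.shiftBy_Vw hsplit) hk
  · by_contra hinv
    have hu := hd.shiftBy_Vu (List.append_nil d).symm ⟨e, he, hk, by simpa using hinv⟩
    rw [hend] at hu
    exact absurd hu (by simp [ft, Vu])

theorem kind_eq_none_iff (hd : AllTight T d) (hinv : ∀ e ∈ d, e.inv = true)
    {e e' : Move n} (he : e ∈ d) (he' : e' ∈ d) (htriple : e.triple = e'.triple) :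
    e.kind = none ↔ e'.kind = none := by
  have hunmixed : Unmixed (shiftBy T f0 d) d := by
    refine List.prefix_induction (fun d₁ => Unmixed (shiftBy T f0 d₁) d₁)
      (fun i => Or.inl (by simp)) ?_ (List.append_nil d).symm
    intro d₁ e d₂ hsplit h
    rw [shiftBy_append_singleton]
    exact h.comp_perm (hd d₁ e d₂ hsplit) (hinv e (by simp [hsplit]))
  rcases hunmixed e.triple with h | h
  · exact iff_of_false (h e he rfl).1 (h e' he' htriple.symm).1
  · exact iff_of_true (h e he rfl).1 (h e' he' htriple.symm).1

end AllTight

theorem hasMatching_of_moves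
    (hcover : ∀ j a, ∃ e ∈ d, e.kind = some j ∧ coord j (T e.triple) = a)
    (hpure : ∀ e ∈ d, ∀ e' ∈ d, e.triple = e'.triple → (e.kind = none ↔ e'.kind = none))
    (htriple : ∀ i, d.countP (·.triple = i) = 3) (hblue : d.countP (·.kind ≠ none) = 3 * m) :
    HasMatching m n T := by
  classical
  let S := Finset.univ.filter fun i => ∃ e ∈ d, e.triple = i ∧ e.kind ≠ none
  have hcount (i : Fin n) :
      d.countP (fun e => e.kind ≠ none ∧ e.triple = i) = if i ∈ S then 3 else 0 := by
    split_ifs with hi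
    · obtain ⟨e, he, rfl, hk⟩ := (Finset.mem_filter.1 hi).2
      refine (List.countP_congr fun e' he' => ?_).trans (htriple e.triple)
      simp only [decide_eq_true_eq, and_iff_right_iff_imp]
      exact fun h => mt (hpure e' he' e he h).1 hk
    · refine List.countP_eq_zero.2 fun e he h => hi ?_
      simp only [decide_eq_true_eq] at h
      exact Finset.mem_filter.2 ⟨Finset.mem_univ _, e, he, h.2, h.1⟩
  have hcard : S.card = m := by
    have := List.sum_countP_and_eq_countP d (·.kind ≠ none) Move.triple
    simp only [hcount, Finset.sum_ite_mem, Finset.univ_inter, Finset.sum_const,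
      smul_eq_mul] at this
    omega
  have hS (j : Fin 3) (a : Fin m) : ∃ i ∈ S, coord j (T i) = a := by
    obtain ⟨e, he, hk, ha⟩ := hcover j a
    exact ⟨e.triple, Finset.mem_filter.2 ⟨Finset.mem_univ _, e, he, rfl, by simp [hk]⟩, ha⟩
  exact ⟨S, hcard, hS 0, hS 1, hS 2⟩

end TokenShift

theorem short_shifting_sequence_implies_matching_general (m n : ℕ)
    (T : Fin n → Fin m × Fin m × Fin m)
    (hseq : ∃ l : List (Equiv.Perm (Vtx m n)),
      l.length ≤ 3 * n ∧
      (∀ γ ∈ l, γ ∈ Vtx.cycleSet T ∨ γ⁻¹ ∈ Vtx.cycleSet T) ∧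
      (Vtx.ft : Vtx m n → Bool) = Vtx.f0 ∘ ⇑l.prod) :
    HasMatching m n T := by
  obtain ⟨l, hlen, hcycles, hprod⟩ := hseq
  obtain ⟨d, rfl⟩ := TokenShift.exists_map_perm_eq hcycles
  have hend : TokenShift.shiftBy T Vtx.f0 d = Vtx.ft := by
    rw [TokenShift.shiftBy_eq_comp_prod, hprod]
  rw [List.length_map] at hlen
  obtain ⟨htriple, hred, hblue⟩ := TokenShift.countP_eq_of_length_le hend hlen
  have hd := TokenShift.allTight hend htriple hred
  exact TokenShift.hasMatching_of_moves (TokenShift.exists_mem_kind_coord hend)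
    (fun e he e' he' => hd.kind_eq_none_iff (fun e he => hd.inv_eq_true hend he) he he')
    htriple hblue

/-- If there is a permutation `π` of the vertex set that is a product of at
most `3 * n` elements of `𝒞 ∪ 𝒞⁻¹` with `f_t = f_0 ∘ π`, then the 3DM instance has a
matching. -/
theorem short_shifting_sequence_implies_matching (m n : ℕ) (hmn : m ≤ n)
    (T : Fin n → Fin m × Fin m × Fin m) (hT : Function.Injective T)
    (hseq : ∃ l : List (Equiv.Perm (Vtx m n)),
      l.length ≤ 3 * n ∧
      (∀ γ ∈ l, γ ∈ Vtx.cycleSet T ∨ γ⁻¹ ∈ Vtx.cycleSet T) ∧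
      (Vtx.ft : Vtx m n → Bool) = Vtx.f0 ∘ ⇑l.prod) :
    HasMatching m n T :=
  short_shifting_sequence_implies_matching_general m n T hseq
end
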